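/- arXiv:1608.07021 — 7 statements merged into one kernel-verified Lean document; each statement's English description precedes it below -/
import Mathlib

section
/- Let f : 2^N → ℝ ∪ {-∞} be an M♮-concave function. For any X, Y ∈ argmax f (the set of maximizers of f over 2^N) and any I ⊆ X \ Y, there exists J ⊆ Y \ X such that (X \ I) ∪ J ∈ argmax f and (Y \ J) ∪ I ∈ argmax f. -/
/-!
(M♮-EXC) applied to two maximizers of `f` forces the two sets on the winning side to be
maximizers too, since their values sum to at least `2 max f`. So the maximizers satisfy an
exchange and an augmentation property, and padding each maximizer `X` with `|N| - |X|` dummy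
elements of a second copy of `N` makes them the bases of a matroid on `N ⊕ N`.

The claim is thereby reduced to symmetric multiple exchange for matroid bases: for bases `B₁, B₂`
and `I ⊆ B₁ \ B₂` there is `J ⊆ B₂ \ B₁` with `B₁ - I + J` and `B₂ - J + I` bases. Such a `J` is
a common independent set of size `|I|` of the contraction `M / (B₁ \ I)` and of the dual of
`M / (I ∪ (B₁ ∩ B₂))`, both on `B₂ \ B₁`; it exists by Edmonds' matroid intersection theorem,
whose rank condition here is one application of submodularity.
-/

open Finset

/-- (M♮-EXC): exchange property for set functions into ℝ ∪ {-∞}. -/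
def MExc {N : Type*} [DecidableEq N] (f : Finset N → WithBot ℝ) : Prop :=
  ∀ X Y : Finset N, ∀ i ∈ X \ Y,
    f X + f Y ≤ max (f (X.erase i) + f (insert i Y))
      ((Y \ X).sup fun j => f (insert j (X.erase i)) + f ((insert i Y).erase j))

theorem WithBot.eq_and_eq_of_add_le {α : Type*} [AddCommMonoid α] [LinearOrder α]
    [IsOrderedCancelAddMonoid α] {m x y : WithBot α} (hm : m ≠ ⊥) (hx : x ≤ m) (hy : y ≤ m)
    (h : m + m ≤ x + y) : x = m ∧ y = m := by
  lift m to α using hm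
  lift x to α using fun hx => by simp_all
  lift y to α using fun hy => by simp_all
  norm_cast at hx hy h ⊢
  constructor
  · by_contra hne
    exact (add_lt_add_of_lt_of_le (lt_of_le_of_ne hx hne) hy).not_ge h
  · by_contra hne
    exact (add_lt_add_of_le_of_lt hx (lt_of_le_of_ne hy hne)).not_ge h

section Maximizer

variable {α β : Type*}

def IsMaximizer [LE β] (f : α → β) (a : α) : Prop := ∀ b, f b ≤ f a

theorem IsMaximizer.of_eq [LE β] {f : α → β} {a b : α} (ha : IsMaximizer f a) (h : f b = f a) :
    IsMaximizer f b :=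
  fun c => h ▸ ha c

theorem IsMaximizer.ne_bot [PartialOrder β] [OrderBot β] {f : α → β} (hdom : ∃ b, f b ≠ ⊥)
    {a : α} (ha : IsMaximizer f a) : f a ≠ ⊥ := by
  obtain ⟨b, hb⟩ := hdom
  exact ne_bot_of_le_ne_bot hb (ha b)

end Maximizer

section MExc

variable {N : Type*} [DecidableEq N] {f : Finset N → WithBot ℝ}

theorem MExc.isMaximizer_exchange (hf : MExc f) (hdom : ∃ X, f X ≠ ⊥) {A B : Finset N}
    (hA : IsMaximizer f A) (hB : IsMaximizer f B) {a : N} (ha : a ∈ A \ B) :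
    (IsMaximizer f (A.erase a) ∧ IsMaximizer f (insert a B)) ∨
      ∃ b ∈ B \ A, IsMaximizer f (insert b (A.erase a)) ∧
        IsMaximizer f ((insert a B).erase b) := by
  have hmax : f B ≠ ⊥ := hB.ne_bot hdom
  have h := hf A B a ha
  rw [le_antisymm (hB A) (hA B)] at h
  rcases le_max_iff.mp h with h | h
  · obtain ⟨h₁, h₂⟩ := WithBot.eq_and_eq_of_add_le hmax (hB _) (hB _) h
    exact Or.inl ⟨hB.of_eq h₁, hB.of_eq h₂⟩
  · obtain hBA | hBA := (B \ A).eq_empty_or_nonempty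
    · simp [hBA, WithBot.add_eq_bot, hmax] at h
    obtain ⟨b, hb, hsup⟩ := exists_mem_eq_sup _ hBA
      fun j => f (insert j (A.erase a)) + f ((insert a B).erase j)
    rw [hsup] at h
    obtain ⟨h₁, h₂⟩ := WithBot.eq_and_eq_of_add_le hmax (hB _) (hB _) h
    exact Or.inr ⟨b, hb, hB.of_eq h₁, hB.of_eq h₂⟩

theorem MExc.exists_insert_isMaximizer (hf : MExc f) (hdom : ∃ X, f X ≠ ⊥) {A B : Finset N}
    (hA : IsMaximizer f A) (hB : IsMaximizer f B) (hcard : #A < #B) :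
    ∃ b ∈ B \ A, IsMaximizer f (insert b A) := by
  induction hk : #(B \ A) using Nat.strong_induction_on generalizing B with
  | _ k ih =>
    obtain ⟨b, hb⟩ : (B \ A).Nonempty := by
      rw [nonempty_iff_ne_empty, Ne, sdiff_eq_empty_iff_subset]
      exact fun h => (card_le_card h).not_gt hcard
    rcases hf.isMaximizer_exchange hdom hB hA hb with ⟨-, hins⟩ | ⟨a, ha, hB', -⟩
    · exact ⟨b, hb, hins⟩
    obtain ⟨hbB, hbA⟩ := mem_sdiff.1 hb
    obtain ⟨haA, haB⟩ := mem_sdiff.1 ha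
    have hsdiff : insert a (B.erase b) \ A = (B \ A).erase b := by
      ext x
      simp only [mem_sdiff, mem_insert, mem_erase]
      grind
    have hcard' : #(insert a (B.erase b)) = #B := by
      rw [card_insert_of_notMem fun h => haB (mem_of_mem_erase h), card_erase_add_one hbB]
    obtain ⟨c, hc, hmax⟩ :=
      ih _ (hk ▸ hsdiff ▸ card_erase_lt_of_mem hb) hB' (hcard' ▸ hcard) rfl
    exact ⟨c, mem_of_mem_erase (hsdiff ▸ hc), hmax⟩

end MExc

section RankFn

variable {γ : Type*} [DecidableEq γ]

structure IsRankFn (ρ : Finset γ → ℕ) : Prop where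
  empty : ρ ∅ = 0
  mono : Monotone ρ
  submod : ∀ S T, ρ (S ∪ T) + ρ (S ∩ T) ≤ ρ S + ρ T
  singleton_le : ∀ x, ρ {x} ≤ 1

namespace IsRankFn

variable {ρ ρ₁ ρ₂ : Finset γ → ℕ}

theorem insert_le_add_singleton (h : IsRankFn ρ) (x : γ) (S : Finset γ) :
    ρ (insert x S) ≤ ρ S + ρ {x} := by
  have := h.submod S {x}
  rw [union_singleton] at this
  omega

theorem insert_le_add_one (h : IsRankFn ρ) (x : γ) (S : Finset γ) : ρ (insert x S) ≤ ρ S + 1 :=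
  (h.insert_le_add_singleton x S).trans (Nat.add_le_add_left (h.singleton_le x) _)

theorem union_le_add_card (h : IsRankFn ρ) (S T : Finset γ) : ρ (S ∪ T) ≤ ρ S + #T := by
  induction T using Finset.induction_on with
  | empty => simp
  | insert a T ha ih =>
    rw [union_insert, card_insert_of_notMem ha]
    have := h.insert_le_add_one a (S ∪ T)
    omega

theorem le_sdiff_add_card (h : IsRankFn ρ) (E S : Finset γ) : ρ E ≤ ρ (E \ S) + #S :=
  (h.mono (show E ⊆ E \ S ∪ S by simp)).trans (h.union_le_add_card _ _)

theorem contract (h : IsRankFn ρ) (D : Finset γ) : IsRankFn fun S => ρ (S ∪ D) - ρ D where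
  empty := by simp
  mono S T hST := Nat.sub_le_sub_right (h.mono (union_subset_union hST subset_rfl)) _
  submod S T := by
    have hsub := h.submod (S ∪ D) (T ∪ D)
    rw [← union_union_distrib_right, ← inter_union_distrib_right] at hsub
    have := h.mono (subset_union_right : D ⊆ (S ∩ T) ∪ D)
    have := h.mono (subset_union_right : D ⊆ (S ∪ T) ∪ D)
    omega
  singleton_le x := by
    have := h.insert_le_add_one x D
    rw [← union_singleton, union_comm] at this
    omega

theorem dual (h : IsRankFn ρ) (E : Finset γ) : IsRankFn fun S => #S + ρ (E \ S) - ρ E where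
  empty := by simp
  mono S T hST := by
    have hsub : E \ S ⊆ E \ T ∪ (T \ S) := by
      intro x; simp only [mem_sdiff, mem_union]; tauto
    have := (h.mono hsub).trans (h.union_le_add_card _ _)
    have := card_sdiff_add_card_eq_card hST
    beta_reduce
    omega
  submod S T := by
    have hsub := h.submod (E \ S) (E \ T)
    rw [← sdiff_inter_distrib_right, ← sdiff_union_distrib] at hsub
    have := card_union_add_card_inter S T
    have := h.le_sdiff_add_card E (S ∪ T)
    have := h.le_sdiff_add_card E (S ∩ T)
    omega
  singleton_le x := by
    have := h.mono (sdiff_subset : E \ {x} ⊆ E)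
    simp only [card_singleton]
    omega

/-- The inductive step of matroid intersection: if the rank condition on `insert e E` fails on
`E` at `Z₁`, uncrossing `Z₁` with `Z` shows that it holds for both contractions by `e`. -/
theorem succ_le_insert_add_insert {e : γ} {E Z₁ Z : Finset γ} {k : ℕ} (h₁ : IsRankFn ρ₁)
    (h₂ : IsRankFn ρ₂) (he : e ∉ E) (hk : ∀ Z ⊆ insert e E, k ≤ ρ₁ Z + ρ₂ (insert e E \ Z)) (hZ₁ : Z₁ ⊆ E)
    (hlt : ρ₁ Z₁ + ρ₂ (E \ Z₁) < k) (hZ : Z ⊆ E) :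
    k + 1 ≤ ρ₁ (insert e Z) + ρ₂ (insert e (E \ Z)) := by
  have hsub₁ := h₁.submod Z₁ (insert e Z)
  have hsub₂ := h₂.submod (E \ Z₁) (insert e (E \ Z))
  rw [show Z₁ ∪ insert e Z = insert e (Z₁ ∪ Z) by grind,
    show Z₁ ∩ insert e Z = Z₁ ∩ Z by grind] at hsub₁
  rw [show E \ Z₁ ∪ insert e (E \ Z) = insert e E \ (Z₁ ∩ Z) by grind,
    show E \ Z₁ ∩ insert e (E \ Z) = insert e E \ insert e (Z₁ ∪ Z) by grind] at hsub₂
  have hinter := hk (Z₁ ∩ Z) ((inter_subset_left.trans hZ₁).trans (subset_insert e E))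
  have hunion := hk (insert e (Z₁ ∪ Z)) (insert_subset_insert e (union_subset hZ₁ hZ))
  omega

/-- Edmonds' matroid intersection theorem, in the direction giving a common independent set. -/
theorem exists_common_indep (h₁ : IsRankFn ρ₁) (h₂ : IsRankFn ρ₂) (E : Finset γ) (k : ℕ)
    (hk : ∀ Z ⊆ E, k ≤ ρ₁ Z + ρ₂ (E \ Z)) : ∃ T ⊆ E, #T = k ∧ ρ₁ T = k ∧ ρ₂ T = k := by
  induction E using Finset.induction_on generalizing ρ₁ ρ₂ k with
  | empty =>
    have := hk ∅ subset_rfl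
    rw [empty_sdiff, h₁.empty, h₂.empty] at this
    exact ⟨∅, subset_rfl, by simp [h₁.empty, h₂.empty]; omega⟩
  | insert e E he ih =>
    by_cases hdel : ∀ Z ⊆ E, k ≤ ρ₁ Z + ρ₂ (E \ Z)
    · obtain ⟨T, hTE, hT⟩ := ih h₁ h₂ k hdel
      exact ⟨T, hTE.trans (subset_insert e E), hT⟩
    push Not at hdel
    obtain ⟨Z₁, hZ₁, hlt⟩ := hdel
    have he₁ : ρ₁ {e} = 1 := by
      have := hk (insert e Z₁) (insert_subset_insert e hZ₁)
      rw [insert_sdiff_insert, sdiff_insert_of_notMem he] at this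
      have := h₁.insert_le_add_singleton e Z₁
      have := h₁.singleton_le e
      omega
    have he₂ : ρ₂ {e} = 1 := by
      have := hk Z₁ (hZ₁.trans (subset_insert e E))
      rw [insert_sdiff_of_notMem _ fun h => he (hZ₁ h)] at this
      have := h₂.insert_le_add_singleton e (E \ Z₁)
      have := h₂.singleton_le e
      omega
    obtain ⟨T, hTE, hTcard, hT₁, hT₂⟩ := ih (h₁.contract {e}) (h₂.contract {e}) (k - 1)
      fun Z hZ => by
        have := h₁.succ_le_insert_add_insert h₂ he hk hZ₁ hlt hZ
        simp only [union_singleton, he₁, he₂]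
        omega
    simp only [union_singleton, he₁, he₂] at hT₁ hT₂
    have heT : e ∉ T := fun h => he (hTE h)
    have := h₁.mono (singleton_subset_iff.2 (mem_insert_self e T))
    have := h₂.mono (singleton_subset_iff.2 (mem_insert_self e T))
    refine ⟨insert e T, insert_subset_insert e hTE, ?_, ?_, ?_⟩
    · rw [card_insert_of_notMem heT]; omega
    · omega
    · omega

end IsRankFn

end RankFn

namespace Matroid

variable {α : Type*} {M : Matroid α}

/-- Takes the junk value `0` where `M.eRk S = ⊤`, which cannot happen if `M` has finite rank. -/
noncomputable def finsetRk (M : Matroid α) (S : Finset α) : ℕ := (M.eRk S).toNat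

theorem coe_finsetRk (M : Matroid α) [M.RankFinite] (S : Finset α) :
    (M.finsetRk S : ℕ∞) = M.eRk S :=
  ENat.natCast_toNat (M.isRkFinite_set _).eRk_lt_top.ne

theorem isRankFn_finsetRk [DecidableEq α] (M : Matroid α) [M.RankFinite] : IsRankFn M.finsetRk where
  empty := by simp [finsetRk]
  mono S T hST := by
    rw [← Nat.cast_le (α := ℕ∞), coe_finsetRk, coe_finsetRk]
    exact M.eRk_mono (coe_subset.2 hST)
  submod S T := by
    rw [← Nat.cast_le (α := ℕ∞)]
    push_cast
    simp only [coe_finsetRk, coe_union, coe_inter]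
    rw [add_comm]
    exact M.eRk_inter_add_eRk_union_le _ _
  singleton_le x := by
    rw [← Nat.cast_le (α := ℕ∞), coe_finsetRk, coe_singleton, Nat.cast_one]
    exact M.eRk_singleton_le x

theorem Indep.finsetRk_eq {S : Finset α} (hS : M.Indep S) : M.finsetRk S = #S := by
  rw [finsetRk, hS.eRk_eq_encard, Set.encard_coe_eq_coe_finsetCard, ENat.toNat_natCast]

theorem IsBase.finsetRk_le {B : Finset α} (hB : M.IsBase B) (S : Finset α) :
    M.finsetRk S ≤ #B := by
  have := hB.rankFinite_of_finite B.finite_toSet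
  rw [← Nat.cast_le (α := ℕ∞), coe_finsetRk, ← Set.encard_coe_eq_coe_finsetCard,
    hB.encard_eq_eRank]
  exact M.eRk_le_eRank _

theorem IsBase.finsetRk_of_subset {B S : Finset α} (hB : M.IsBase B) (hS : S ⊆ B) :
    M.finsetRk S = #S :=
  (hB.indep.subset (coe_subset.2 hS)).finsetRk_eq

theorem IsBase.finsetRk_of_superset [DecidableEq α] {B S : Finset α} (hB : M.IsBase B)
    (hS : B ⊆ S) : M.finsetRk S = #B := by
  have := hB.rankFinite_of_finite B.finite_toSet
  exact le_antisymm (hB.finsetRk_le S)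
    (hB.finsetRk_of_subset subset_rfl ▸ M.isRankFn_finsetRk.mono hS)

theorem IsBase.isBase_of_finsetRk {B S : Finset α} (hB : M.IsBase B) (hS : M.finsetRk S = #B)
    (hcard : #S = #B) : M.IsBase S := by
  have := hB.rankFinite_of_finite B.finite_toSet
  have hS' : M.eRk S = (S : Set α).encard := by
    rw [← coe_finsetRk, hS, Set.encard_coe_eq_coe_finsetCard, hcard]
  refine (indep_iff_eRk_eq_encard.2 hS').isBase_of_eRk_ge S.finite_toSet ?_
  rw [hS', ← hB.encard_eq_eRank, Set.encard_coe_eq_coe_finsetCard,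
    Set.encard_coe_eq_coe_finsetCard, hcard]

theorem IsBase.card_add_le_finsetRk_add_finsetRk [DecidableEq α] {B₁ B₂ I Z : Finset α}
    (h₁ : M.IsBase B₁) (h₂ : M.IsBase B₂) (hI : I ⊆ B₁ \ B₂) (hZ : Z ⊆ B₂ \ B₁) :
    #B₁ + #Z + #(B₁ ∩ B₂) ≤ M.finsetRk (Z ∪ B₁ \ I) + M.finsetRk (Z ∪ (I ∪ B₁ ∩ B₂)) := by
  have := h₁.rankFinite_of_finite B₁.finite_toSet
  have hsub := M.isRankFn_finsetRk.submod (Z ∪ B₁ \ I) (Z ∪ (I ∪ B₁ ∩ B₂))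
  rw [show Z ∪ B₁ \ I ∪ (Z ∪ (I ∪ B₁ ∩ B₂)) = Z ∪ B₁ by grind,
    show (Z ∪ B₁ \ I) ∩ (Z ∪ (I ∪ B₁ ∩ B₂)) = Z ∪ B₁ ∩ B₂ by grind,
    h₁.finsetRk_of_superset subset_union_right,
    h₂.finsetRk_of_subset (union_subset (hZ.trans sdiff_subset) inter_subset_right),
    card_union_of_disjoint (disjoint_left.2 fun x hx hx' => by grind)] at hsub
  omega

theorem IsBase.exists_symm_exchange [DecidableEq α] {B₁ B₂ I : Finset α} (h₁ : M.IsBase B₁)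
    (h₂ : M.IsBase B₂) (hI : I ⊆ B₁ \ B₂) :
    ∃ J ⊆ B₂ \ B₁, M.IsBase ↑(B₁ \ I ∪ J) ∧ M.IsBase ↑(B₂ \ J ∪ I) := by
  have := h₁.rankFinite_of_finite B₁.finite_toSet
  have hr := M.isRankFn_finsetRk
  have hcard : #B₂ = #B₁ := by simpa using h₂.ncard_eq_ncard_of_isBase h₁
  have hle (S) : M.finsetRk S ≤ #B₁ := h₁.finsetRk_le S
  have hIB₁ : I ⊆ B₁ := hI.trans sdiff_subset
  have hIcard := card_le_card hIB₁
  set E := B₂ \ B₁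
  set D := B₁ \ I
  set C := I ∪ B₁ ∩ B₂
  have hCcard : #C = #I + #(B₁ ∩ B₂) :=
    card_union_of_disjoint (disjoint_left.2 fun x hx hx' => by grind)
  have hEcard : #E + #(B₁ ∩ B₂) = #B₁ := by rw [inter_comm, card_sdiff_add_card_inter, hcard]
  have hD : M.finsetRk D = #B₁ - #I := by
    rw [h₁.finsetRk_of_subset sdiff_subset, card_sdiff_of_subset hIB₁]
  have hC : M.finsetRk C = #C := h₁.finsetRk_of_subset (union_subset hIB₁ inter_subset_left)
  have hEC : M.finsetRk (E ∪ C) = #B₁ := hcard ▸ h₂.finsetRk_of_superset (by grind)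
  obtain ⟨J, hJE, hJcard, hJ₁, hJ₂⟩ :=
    (hr.contract D).exists_common_indep ((hr.contract C).dual E) E #I fun Z hZ => by
      rw [Finset.sdiff_sdiff_eq_self hZ]
      have : #B₁ + #Z + #(B₁ ∩ B₂) ≤ M.finsetRk (Z ∪ D) + M.finsetRk (Z ∪ C) :=
        h₁.card_add_le_finsetRk_add_finsetRk h₂ hI hZ
      have := card_sdiff_add_card_eq_card hZ
      have := hr.mono (subset_union_right : D ⊆ Z ∪ D)
      have := hr.mono (subset_union_right : C ⊆ Z ∪ C)
      have := hle (Z ∪ D)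
      have := hle (Z ∪ C)
      omega
  have hJB₂ : J ⊆ B₂ := hJE.trans sdiff_subset
  refine ⟨J, hJE, h₁.isBase_of_finsetRk ?_ ?_, h₁.isBase_of_finsetRk ?_ ?_⟩
  · have := hle (J ∪ D)
    have := hr.mono (subset_union_right : D ⊆ J ∪ D)
    rw [union_comm]
    omega
  · rw [card_union_of_disjoint (disjoint_left.2 fun x hx hx' => by grind),
      card_sdiff_of_subset hIB₁]
    omega
  · have := (hr.contract C).le_sdiff_add_card E J
    beta_reduce at this
    have := hr.mono (show E \ J ∪ C ⊆ E ∪ C by grind)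
    have := hr.mono (subset_union_right : C ⊆ E \ J ∪ C)
    rw [show B₂ \ J ∪ I = E \ J ∪ C by grind]
    omega
  · rw [card_union_of_disjoint (disjoint_left.2 fun x hx hx' => by grind),
      card_sdiff_of_subset hJB₂]
    have := card_le_card hJB₂
    omega

end Matroid

theorem Finset.toLeft_erase_inl {α β : Type*} [DecidableEq α] [DecidableEq β]
    (u : Finset (α ⊕ β)) (a : α) : (u.erase (.inl a)).toLeft = u.toLeft.erase a := by
  ext; simp

theorem Finset.toLeft_erase_inr {α β : Type*} [DecidableEq α] [DecidableEq β]
    (u : Finset (α ⊕ β)) (b : β) : (u.erase (.inr b)).toLeft = u.toLeft := by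
  ext; simp

section Padding

variable {N : Type*} [Fintype N] {f : Finset N → WithBot ℝ}

def IsPaddedMaximizer (f : Finset N → WithBot ℝ) (B : Finset (N ⊕ N)) : Prop :=
  IsMaximizer f B.toLeft ∧ #B = Fintype.card N

theorem IsMaximizer.exists_isPaddedMaximizer {X : Finset N} (hX : IsMaximizer f X) :
    ∃ B, IsPaddedMaximizer f B ∧ B.toLeft = X := by
  obtain ⟨T, -, hT⟩ := exists_subset_card_eq (s := (univ : Finset N)) (n := Fintype.card N - #X)
    (card_univ (α := N) ▸ Nat.sub_le _ _)
  refine ⟨X.disjSum T, ⟨by rwa [toLeft_disjSum], ?_⟩, toLeft_disjSum⟩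
  rw [card_disjSum, hT, Nat.add_sub_cancel' (card_le_univ X)]

variable [DecidableEq N]

theorem MExc.exists_insert_isMaximizer_toLeft (hf : MExc f) (hdom : ∃ X, f X ≠ ⊥)
    {B B₂ : Finset (N ⊕ N)} (hB : IsMaximizer f B.toLeft) (hB₂ : IsPaddedMaximizer f B₂)
    (hcard : #B < #B₂) : ∃ j ∈ B₂ \ B, IsMaximizer f (insert j B).toLeft := by
  by_cases hdummy : ∃ t, .inr t ∈ B₂ \ B
  · obtain ⟨t, ht⟩ := hdummy
    exact ⟨.inr t, ht, by rwa [toLeft_insert_inr]⟩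
  · have hsub : B₂.toRight ⊆ B.toRight := fun t ht => by
      by_contra h
      exact hdummy ⟨t, mem_sdiff.2 ⟨mem_toRight.1 ht, fun h' => h (mem_toRight.2 h')⟩⟩
    have hlt : #B.toLeft < #B₂.toLeft := by
      have := card_le_card hsub
      rw [← card_toLeft_add_card_toRight (u := B), ← card_toLeft_add_card_toRight (u := B₂)]
        at hcard
      omega
    obtain ⟨a, ha, hmax⟩ := hf.exists_insert_isMaximizer hdom hB hB₂.1 hlt
    refine ⟨.inl a, ?_, by rwa [toLeft_insert_inl]⟩
    simpa using ha

theorem MExc.isPaddedMaximizer_exchange (hf : MExc f) (hdom : ∃ X, f X ≠ ⊥)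
    {B₁ B₂ : Finset (N ⊕ N)} (h₁ : IsPaddedMaximizer f B₁) (h₂ : IsPaddedMaximizer f B₂)
    {i : N ⊕ N} (hi : i ∈ B₁ \ B₂) :
    ∃ j ∈ B₂ \ B₁, IsPaddedMaximizer f (insert j (B₁.erase i)) := by
  obtain ⟨hiB₁, hiB₂⟩ := mem_sdiff.1 hi
  suffices ∃ j ∈ B₂ \ B₁, IsMaximizer f (insert j (B₁.erase i)).toLeft by
    obtain ⟨j, hj, hmax⟩ := this
    refine ⟨j, hj, hmax, ?_⟩
    rw [card_insert_of_notMem fun h => (mem_sdiff.1 hj).2 (mem_of_mem_erase h),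
      card_erase_add_one hiB₁, h₁.2]
  by_cases herase : IsMaximizer f (B₁.erase i).toLeft
  · have hcard : #(B₁.erase i) < #B₂ := by
      have := card_pos.2 ⟨i, hiB₁⟩
      rw [card_erase_of_mem hiB₁, h₂.2, ← h₁.2]
      omega
    obtain ⟨j, hj, hmax⟩ := hf.exists_insert_isMaximizer_toLeft hdom herase h₂ hcard
    refine ⟨j, ?_, hmax⟩
    have : j ≠ i := by rintro rfl; exact hiB₂ (mem_sdiff.1 hj).1
    simp_all
  · obtain ⟨a, rfl⟩ : ∃ a, i = .inl a := by
      cases i with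
      | inl a => exact ⟨a, rfl⟩
      | inr t => exact absurd (by rw [toLeft_erase_inr]; exact h₁.1) herase
    have ha : a ∈ B₁.toLeft \ B₂.toLeft := by simpa using hi
    rcases hf.isMaximizer_exchange hdom h₁.1 h₂.1 ha with ⟨hmax, -⟩ | ⟨b, hb, hmax, -⟩
    · exact absurd (by rwa [toLeft_erase_inl]) herase
    · exact ⟨.inl b, by simpa using hb, by rwa [toLeft_insert_inl, toLeft_erase_inl]⟩

noncomputable def paddedMatroid (hf : MExc f) (hdom : ∃ X, f X ≠ ⊥) : Matroid (N ⊕ N) :=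
  Matroid.ofIsBaseOfFinite Set.finite_univ
    (fun B => ∃ B' : Finset (N ⊕ N), ↑B' = B ∧ IsPaddedMaximizer f B')
    (by
      obtain ⟨X, hX⟩ := Finite.exists_max f
      obtain ⟨B, hB, -⟩ := IsMaximizer.exists_isPaddedMaximizer hX
      exact ⟨B, B, rfl, hB⟩)
    (by
      rintro _ _ ⟨B₁, rfl, h₁⟩ ⟨B₂, rfl, h₂⟩ i hi
      obtain ⟨j, hj, hB⟩ := hf.isPaddedMaximizer_exchange hdom h₁ h₂ (by simpa using hi)
      exact ⟨j, by simpa using hj, _, by simp, hB⟩)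
    fun _ _ => Set.subset_univ _

theorem paddedMatroid_isBase_coe (hf : MExc f) (hdom : ∃ X, f X ≠ ⊥) (B : Finset (N ⊕ N)) :
    (paddedMatroid hf hdom).IsBase ↑B ↔ IsPaddedMaximizer f B :=
  ⟨fun ⟨_, hB', hB⟩ => coe_inj.1 hB' ▸ hB, fun hB => ⟨B, rfl, hB⟩⟩

end Padding

theorem mnat_concave_multiple_exchange_argmax {N : Type*} [Fintype N] [DecidableEq N]
    (f : Finset N → WithBot ℝ) (hdom : ∃ X, f X ≠ ⊥) (hf : MExc f)
    (X Y : Finset N) (hX : ∀ Z : Finset N, f Z ≤ f X) (hY : ∀ Z : Finset N, f Z ≤ f Y)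
    (I : Finset N) (hI : I ⊆ X \ Y) :
    ∃ J ⊆ Y \ X, (∀ Z : Finset N, f Z ≤ f ((X \ I) ∪ J)) ∧
      (∀ Z : Finset N, f Z ≤ f ((Y \ J) ∪ I)) := by
  obtain ⟨B₁, hB₁, rfl⟩ := IsMaximizer.exists_isPaddedMaximizer hX
  obtain ⟨B₂, hB₂, rfl⟩ := IsMaximizer.exists_isPaddedMaximizer hY
  have hI' : I.disjSum ∅ ⊆ B₁ \ B₂ := by
    rintro (a | t) h
    · simpa using hI (by simpa using h)
    · simp at h
  obtain ⟨J, hJ, hB₁', hB₂'⟩ := ((paddedMatroid_isBase_coe hf hdom B₁).2 hB₁).exists_symm_exchange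
    ((paddedMatroid_isBase_coe hf hdom B₂).2 hB₂) hI'
  refine ⟨J.toLeft, by simpa [toLeft_sdiff] using toLeft_subset_toLeft hJ, ?_, ?_⟩
  · have := ((paddedMatroid_isBase_coe hf hdom _).1 hB₁').1
    rwa [toLeft_union, toLeft_sdiff, toLeft_disjSum] at this
  · have := ((paddedMatroid_isBase_coe hf hdom _).1 hB₂').1
    rwa [toLeft_union, toLeft_sdiff, toLeft_disjSum] at this
end

section
/- Let X and Y be bases of a matroid M on a finite ground set, and let I ⊆ X \ Y. Then there exists J ⊆ Y \ X such that (X \ I) ∪ J and (Y \ J) ∪ I are both bases of M. -/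
/-!
Put `G = Y \ X`, `P = X \ I` and `Q = I ∪ (X ∩ Y)`, so that `P ∪ Q = X` and `P ∩ Q = X ∩ Y`.
It suffices to split `G` into `J` and `G \ J` with `J ∪ P` and `(G \ J) ∪ Q` independent: these
two sets have union `X ∪ Y` and intersection `X ∩ Y`, so counting makes both of them bases.

Such a split exists by the matroid union theorem (Rado), here relative to `P` and `Q`: it suffices
that `|S| + |P| + |Q| ≤ r(S ∪ P) + r(S ∪ Q)` for all `S ⊆ G`. This follows from submodularity
applied to `S ∪ P` and `S ∪ Q`, since `S ∪ (X ∩ Y) ⊆ Y` is independent. The union theorem is proved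
by induction on `G`: some `e ∈ G` can be added to `P` or to `Q` keeping the condition on `G \ {e}`,
for otherwise two violating sets `A` and `B` would, by submodularity on both sides, violate it at
`insert e (A ∪ B)` or at `A ∩ B`.
-/

namespace Matroid

variable {α : Type*} {M : Matroid α} {B I X Y Z : Set α}

/-- Junk value `0` when `M.eRk X = ⊤`. -/
noncomputable def rk (M : Matroid α) (X : Set α) : ℕ := (M.eRk X).toNat

lemma Indep.rk_eq_ncard (hI : M.Indep I) : M.rk I = I.ncard := by
  rw [rk, hI.eRk_eq_encard, Set.ncard_def]

lemma rk_mono [M.RankFinite] (h : X ⊆ Y) : M.rk X ≤ M.rk Y :=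
  ENat.toNat_le_toNat (M.eRk_mono h) (eRk_ne_top_iff.2 (M.isRkFinite_set Y))

lemma rk_inter_add_rk_union_le [M.RankFinite] (X Y : Set α) :
    M.rk (X ∩ Y) + M.rk (X ∪ Y) ≤ M.rk X + M.rk Y := by
  have hfin : ∀ Z, M.eRk Z ≠ ⊤ := fun Z ↦ eRk_ne_top_iff.2 (M.isRkFinite_set Z)
  simp only [rk, ← ENat.toNat_add (hfin _) (hfin _)]
  exact ENat.toNat_le_toNat (M.eRk_inter_add_eRk_union_le X Y)
    (WithTop.add_ne_top.2 ⟨hfin _, hfin _⟩)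

lemma rk_union_add_rk_le [M.RankFinite] (h : Z ⊆ X ∩ Y) :
    M.rk (X ∪ Y) + M.rk Z ≤ M.rk X + M.rk Y := by
  have := M.rk_inter_add_rk_union_le X Y
  have := M.rk_mono h
  omega

lemma rk_insert_union_union_add_rk_inter_union_le [M.RankFinite] (e : α) (X Y Z : Set α) :
    M.rk (insert e (X ∪ Y) ∪ Z) + M.rk (X ∩ Y ∪ Z) ≤ M.rk (X ∪ insert e Z) + M.rk (Y ∪ Z) := by
  have hunion : X ∪ insert e Z ∪ (Y ∪ Z) = insert e (X ∪ Y) ∪ Z := by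
    ext; simp only [Set.mem_union, Set.mem_insert_iff]; tauto
  rw [← hunion]
  exact rk_union_add_rk_le fun x hx ↦ by
    simp only [Set.mem_inter_iff, Set.mem_union, Set.mem_insert_iff] at hx ⊢; tauto

lemma indep_of_ncard_le_rk (hX : X.Finite) (h : X.ncard ≤ M.rk X) : M.Indep X := by
  have hne : M.eRk X ≠ ⊤ := ((M.eRk_le_encard X).trans_lt hX.encard_lt_top).ne
  refine (indep_iff_eRk_eq_encard_of_finite hX).2 ((M.eRk_le_encard X).antisymm ?_)
  rw [← hX.cast_ncard_eq, ← ENat.natCast_toNat hne]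
  exact_mod_cast h

lemma Indep.ncard_le_ncard_of_isBase [M.RankFinite] (hI : M.Indep I) (hB : M.IsBase B) :
    I.ncard ≤ B.ncard := by
  obtain ⟨B', hB', hIB'⟩ := hI.exists_isBase_superset
  rw [hB.ncard_eq_ncard_of_isBase hB']
  exact Set.ncard_le_ncard hIB' hB'.finite

lemma Indep.isBase_of_ncard_le [M.RankFinite] (hI : M.Indep I) (hB : M.IsBase B)
    (h : B.ncard ≤ I.ncard) : M.IsBase I := by
  obtain ⟨B', hB', hIB'⟩ := hI.exists_isBase_superset
  rw [hB.ncard_eq_ncard_of_isBase hB'] at h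
  rwa [Set.eq_of_subset_of_ncard_le hIB' h hB'.finite]

variable {M₁ M₂ : Matroid α} {P Q G : Set α} {e : α}

def PartitionRankBound (M₁ M₂ : Matroid α) (P Q G : Set α) : Prop :=
  ∀ S ⊆ G, S.ncard + P.ncard + Q.ncard ≤ M₁.rk (S ∪ P) + M₂.rk (S ∪ Q)

lemma PartitionRankBound.symm (h : PartitionRankBound M₁ M₂ P Q G) :
    PartitionRankBound M₂ M₁ Q P G := fun S hS ↦ by
  have := h S hS
  omega

lemma PartitionRankBound.indep (h : PartitionRankBound M₁ M₂ P Q G) (hP : P.Finite)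
    (hQ : M₂.Indep Q) : M₁.Indep P := by
  have h₀ := h ∅ (Set.empty_subset G)
  rw [Set.empty_union, Set.empty_union, hQ.rk_eq_ncard, Set.ncard_empty] at h₀
  exact indep_of_ncard_le_rk hP (by omega)

lemma PartitionRankBound.insert_left_or_insert_right [M₁.RankFinite] [M₂.RankFinite]
    (h : PartitionRankBound M₁ M₂ P Q (insert e G)) (hG : G.Finite) (hP : P.Finite)
    (hQ : Q.Finite) (heG : e ∉ G) (heP : e ∉ P) (heQ : e ∉ Q) :
    PartitionRankBound M₁ M₂ (insert e P) Q G ∨ PartitionRankBound M₁ M₂ P (insert e Q) G := by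
  simp only [PartitionRankBound] at h ⊢
  by_contra! hcon
  obtain ⟨⟨A, hAG, hA⟩, ⟨B, hBG, hB⟩⟩ := hcon
  have hAB := h (insert e (A ∪ B)) (Set.insert_subset_insert (Set.union_subset hAG hBG))
  have hAB' := h (A ∩ B) (Set.inter_subset_left.trans (hAG.trans (Set.subset_insert e G)))
  have hsub₁ := M₁.rk_insert_union_union_add_rk_inter_union_le e A B P
  have hsub₂ := M₂.rk_insert_union_union_add_rk_inter_union_le e B A Q
  rw [Set.union_comm B A, Set.inter_comm B A] at hsub₂
  have hAfin := hG.subset hAG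
  have hBfin := hG.subset hBG
  have hcard := Set.ncard_union_add_ncard_inter A B hAfin hBfin
  rw [Set.ncard_insert_of_notMem (fun he ↦ heG (Set.union_subset hAG hBG he))
    (hAfin.union hBfin)] at hAB
  rw [Set.ncard_insert_of_notMem heP hP] at hA
  rw [Set.ncard_insert_of_notMem heQ hQ] at hB
  omega

theorem PartitionRankBound.exists_partition [M₁.RankFinite] [M₂.RankFinite]
    (h : PartitionRankBound M₁ M₂ P Q G) (hG : G.Finite) (hP : M₁.Indep P) (hQ : M₂.Indep Q)
    (hGP : Disjoint G P) (hGQ : Disjoint G Q) :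
    ∃ S ⊆ G, M₁.Indep (S ∪ P) ∧ M₂.Indep (G \ S ∪ Q) := by
  induction G, hG using Set.Finite.induction_on generalizing P Q with
  | empty => exact ⟨∅, subset_rfl, by simpa using hP, by simpa using hQ⟩
  | @insert e G heG hG ih =>
    rw [Set.disjoint_insert_left] at hGP hGQ
    obtain hleft | hright :=
      h.insert_left_or_insert_right hG hP.finite hQ.finite heG hGP.1 hGQ.1
    · obtain ⟨S, hSG, hSP, hSQ⟩ := ih hleft (hleft.indep (hP.finite.insert e) hQ) hQ
        (Set.disjoint_insert_right.2 ⟨heG, hGP.2⟩) hGQ.2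
      refine ⟨insert e S, Set.insert_subset_insert hSG, ?_, ?_⟩
      · rwa [Set.insert_union, ← Set.union_insert]
      · rwa [Set.insert_sdiff_of_mem _ (Set.mem_insert e S), Set.sdiff_insert_of_notMem heG]
    · obtain ⟨S, hSG, hSP, hSQ⟩ := ih hright hP (hright.symm.indep (hQ.finite.insert e) hP)
        hGP.2 (Set.disjoint_insert_right.2 ⟨heG, hGQ.2⟩)
      refine ⟨S, hSG.trans (Set.subset_insert e G), hSP, ?_⟩
      rwa [Set.insert_sdiff_of_notMem _ (fun heS ↦ heG (hSG heS)), Set.insert_union,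
        ← Set.union_insert]

lemma partitionRankBound_of_indep [M.RankFinite] (hPQ : M.Indep (P ∪ Q)) (hY : M.Indep Y)
    (hPQY : P ∩ Q ⊆ Y) : PartitionRankBound M M P Q (Y \ (P ∪ Q)) := by
  intro S hS
  obtain ⟨hSY, hSPQ⟩ := Set.subset_sdiff.1 hS
  have hPfin : P.Finite := hPQ.finite.subset Set.subset_union_left
  have hQfin : Q.Finite := hPQ.finite.subset Set.subset_union_right
  have hsub : M.rk (S ∪ (P ∪ Q)) + M.rk (S ∪ P ∩ Q) ≤ M.rk (S ∪ P) + M.rk (S ∪ Q) := by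
    rw [Set.union_union_distrib_left]
    exact rk_union_add_rk_le (Set.union_inter_distrib_left S P Q).le
  have hunion : (P ∪ Q).ncard ≤ M.rk (S ∪ (P ∪ Q)) :=
    hPQ.rk_eq_ncard ▸ M.rk_mono Set.subset_union_right
  have hinter : M.rk (S ∪ P ∩ Q) = S.ncard + (P ∩ Q).ncard := by
    rw [(hY.subset (Set.union_subset hSY hPQY)).rk_eq_ncard, Set.ncard_union_eq
      (hSPQ.mono_right (Set.inter_subset_left.trans Set.subset_union_left))
      (hY.finite.subset hSY) (hPfin.inter_of_left Q)]
  have hcard := Set.ncard_union_add_ncard_inter P Q hPfin hQfin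
  omega

lemma isBase_and_isBase_of_union_subset_of_inter_subset [M.RankFinite] {I₁ I₂ : Set α}
    (hX : M.IsBase X) (hY : M.IsBase Y) (hI₁ : M.Indep I₁) (hI₂ : M.Indep I₂)
    (hu : X ∪ Y ⊆ I₁ ∪ I₂) (hi : X ∩ Y ⊆ I₁ ∩ I₂) : M.IsBase I₁ ∧ M.IsBase I₂ := by
  have hXY := Set.ncard_union_add_ncard_inter X Y hX.finite hY.finite
  have hI := Set.ncard_union_add_ncard_inter I₁ I₂ hI₁.finite hI₂.finite
  have hu' := Set.ncard_le_ncard hu (hI₁.finite.union hI₂.finite)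
  have hi' := Set.ncard_le_ncard hi (hI₁.finite.inter_of_left I₂)
  have hI₁X := hI₁.ncard_le_ncard_of_isBase hX
  have hI₂Y := hI₂.ncard_le_ncard_of_isBase hY
  exact ⟨hI₁.isBase_of_ncard_le hX (by omega), hI₂.isBase_of_ncard_le hY (by omega)⟩

end Matroid

theorem matroid_base_multiple_exchange {α : Type*} (M : Matroid α) [M.Finite]
    (X Y : Set α) (hX : M.IsBase X) (hY : M.IsBase Y) (I : Set α) (hI : I ⊆ X \ Y) :
    ∃ J ⊆ Y \ X, M.IsBase ((X \ I) ∪ J) ∧ M.IsBase ((Y \ J) ∪ I) := by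
  have hPQ : X \ I ∪ (I ∪ X ∩ Y) = X := by grind
  have hPQY : X \ I ∩ (I ∪ X ∩ Y) ⊆ Y := by grind
  have hQX : I ∪ X ∩ Y ⊆ X := Set.subset_union_right.trans hPQ.subset
  have hbound : M.PartitionRankBound M (X \ I) (I ∪ X ∩ Y) (Y \ X) := by
    simpa only [hPQ] using Matroid.partitionRankBound_of_indep (hPQ.symm ▸ hX.indep) hY.indep hPQY
  obtain ⟨J, hJ, hJP, hJQ⟩ := hbound.exists_partition hY.finite.sdiff
    (hX.indep.subset Set.sdiff_subset) (hX.indep.subset hQX)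
    (Set.disjoint_sdiff_left.mono_right Set.sdiff_subset)
    (Set.disjoint_sdiff_left.mono_right hQX)
  have hJQ' : (Y \ X) \ J ∪ (I ∪ X ∩ Y) = Y \ J ∪ I := by grind
  rw [Set.union_comm] at hJP
  rw [hJQ'] at hJQ
  exact ⟨J, hJ,
    Matroid.isBase_and_isBase_of_union_subset_of_inter_subset hX hY hJP hJQ (by grind) (by grind)⟩
end

section
/- Let f : 2^N → ℝ ∪ {-∞} be M♮-concave, let X, Y ∈ dom f and I ⊆ X \ Y. Set C = X ∩ Y, X₀ = X \ Y, Y₀ = Y \ X, and define f₁(J) = f((X₀ \ I) ∪ C ∪ J) and f₂(J) = f(I ∪ C ∪ (Y₀ \ J)) for J ⊆ Y₀, with conjugates g₁(q) = max_{J ⊆ Y₀} { f₁(J) − q(J) } and g₂(q) = max_{J ⊆ Y₀} { f₂(J) − q(J) } for q ∈ ℝ^{Y₀}, where q(J) = Σ_{j ∈ J} q_j. Then for every q ∈ ℝ^{Y₀}, g₁(q) + g₂(−q) ≥ f(X) + f(Y). -/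
/-!
The concave conjugate `g p = max_Z (f Z - p(Z))` of an M♮-concave function is submodular on
`ℝ^N`: the exchange axiom gives `g p + g (p + s eᵢ + t eⱼ) ≤ g (p + s eᵢ) + g (p + t eⱼ)` for
`i ≠ j` and `s, t ≥ 0`, and these inequalities add up along coordinates. Evaluating `g` at a weight
that is `-M` on `A`, `q` on `Y₀` and `M` elsewhere, with `M` large, recovers
`max_{J ⊆ Y₀} (f (A ∪ J) - q(J)) + M |A|`; hence this partial maximisation is submodular in `A`.
For `K = X \ I` and `L = I ∪ (X ∩ Y)` we have `K ∪ L = X` and `K ∩ L = X ∩ Y`, and choosing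
`J = ∅` for `X` and `J = Y₀` for `Y` bounds `f X + f Y` by `g₁(q) + g₂(-q)`.
-/

open Finset

section DecreasingDifferences

variable {ι : Type*} (φ : (ι → ℝ) → ℝ)

def HasDecreasingDiff (a d : ι → ℝ) : Prop :=
  ∀ u, φ u + φ (u + a + d) ≤ φ (u + a) + φ (u + d)

variable {φ}

namespace HasDecreasingDiff

lemma zero_left (d : ι → ℝ) : HasDecreasingDiff φ 0 d := fun u => by simp

lemma symm {a d : ι → ℝ} (h : HasDecreasingDiff φ a d) : HasDecreasingDiff φ d a := fun u => by
  simpa only [add_right_comm u a d, add_comm (φ (u + a))] using h u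

lemma add_left {a₁ a₂ d : ι → ℝ} (h₁ : HasDecreasingDiff φ a₁ d)
    (h₂ : HasDecreasingDiff φ a₂ d) : HasDecreasingDiff φ (a₁ + a₂) d := fun u => by
  have := h₁ u
  have := h₂ (u + a₁)
  rw [← add_assoc]
  linarith

variable [Fintype ι] [DecidableEq ι]

lemma of_disjoint_support
    (hloc : ∀ i j, i ≠ j → ∀ s t : ℝ, 0 ≤ s → 0 ≤ t →
      HasDecreasingDiff φ (Pi.single i s) (Pi.single j t))
    {a d : ι → ℝ} (ha : 0 ≤ a) (hd : 0 ≤ d) (had : ∀ i, a i = 0 ∨ d i = 0) :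
    HasDecreasingDiff φ a d := by
  rw [← univ_sum_single a, ← univ_sum_single d]
  refine sum_induction _ (HasDecreasingDiff φ · _) (fun _ _ => add_left) (zero_left _)
    fun i _ => symm ?_
  refine sum_induction _ (HasDecreasingDiff φ · _) (fun _ _ => add_left) (zero_left _)
    fun j _ => symm ?_
  obtain rfl | hij := eq_or_ne i j
  · rcases had i with h | h <;> simp only [h, Pi.single_zero]
    exacts [zero_left _, (zero_left _).symm]
  · exact hloc i j hij _ _ (ha i) (hd j)

end HasDecreasingDiff

theorem sup_add_inf_le_of_hasDecreasingDiff_single [Fintype ι] [DecidableEq ι]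
    (hloc : ∀ i j, i ≠ j → ∀ s t : ℝ, 0 ≤ s → 0 ≤ t →
      HasDecreasingDiff φ (Pi.single i s) (Pi.single j t))
    (p p' : ι → ℝ) : φ (p ⊔ p') + φ (p ⊓ p') ≤ φ p + φ p' := by
  have h := HasDecreasingDiff.of_disjoint_support hloc
    (sub_nonneg.2 (inf_le_left : p ⊓ p' ≤ p)) (sub_nonneg.2 (inf_le_right : p ⊓ p' ≤ p'))
    (fun i => by rcases le_total (p i) (p' i) with h | h <;> simp [h]) (p ⊓ p')
  have hsup : p ⊓ p' + (p - p ⊓ p') + (p' - p ⊓ p') = p ⊔ p' := by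
    funext i
    rcases le_total (p i) (p' i) with h | h <;> simp [h]
  rw [hsup, add_sub_cancel, add_sub_cancel] at h
  linarith

end DecreasingDifferences

lemma WithBot.add_coe_add_add_coe (a b : WithBot ℝ) (x y : ℝ) :
    (a + x) + (b + y) = (a + b) + ((x + y : ℝ) : WithBot ℝ) := by
  rw [WithBot.coe_add]
  exact add_add_add_comm a _ b _

lemma WithBot.coe_le_add_of_le_max_add_max {a b : WithBot ℝ} {r β T : ℝ}
    (ha : a ≤ T) (hb : b ≤ T) (hβ : β ≤ T) (hr : T + β < r)
    (h : (r : WithBot ℝ) ≤ max a β + max b β) : (r : WithBot ℝ) ≤ a + b := by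
  induction a using WithBot.recBotCoe <;> induction b using WithBot.recBotCoe <;>
    simp only [bot_le, max_eq_right, WithBot.bot_add, WithBot.add_bot, ← WithBot.coe_max,
      ← WithBot.coe_add, WithBot.coe_le_coe] at * <;>
    (try simp only [max_def] at h) <;> (try split_ifs at h) <;> linarith

lemma exists_forall_le_coe {α : Type*} [Finite α] (f : α → WithBot ℝ) :
    ∃ F : ℝ, ∀ a, f a ≤ F := by
  obtain ⟨F, hF⟩ := Finite.exists_le fun a => (f a).unbotD 0
  exact ⟨F, fun a => (WithBot.le_coe_unbotD (f a) 0).trans (WithBot.coe_le_coe.2 (hF a))⟩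

lemma neg_sum_le_sum_abs_of_subset {ι : Type*} {J D : Finset ι} (hJ : J ⊆ D) (q : ι → ℝ) :
    -∑ j ∈ J, q j ≤ ∑ j ∈ D, |q j| := calc
  -∑ j ∈ J, q j ≤ ∑ j ∈ J, |q j| := by
    rw [← sum_neg_distrib]
    exact sum_le_sum fun j _ => neg_le_abs (q j)
  _ ≤ ∑ j ∈ D, |q j| := sum_le_sum_of_subset_of_nonneg hJ fun j _ _ => abs_nonneg (q j)

lemma sum_add_single {ι : Type*} [DecidableEq ι] (p : ι → ℝ) (i : ι) (s : ℝ) (Z : Finset ι) :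
    ∑ e ∈ Z, (p + Pi.single i s : ι → ℝ) e = ∑ e ∈ Z, p e + if i ∈ Z then s else 0 := by
  simp [sum_add_distrib, sum_pi_single']

section Conjugate

variable {N : Type*} {f : Finset N → WithBot ℝ}

lemma MExc.exists_exchange [DecidableEq N] (hf : MExc f) {X Y : Finset N} {i : N}
    (hi : i ∈ X \ Y) :
    ∃ X' Y', i ∉ X' ∧ Y' ⊆ insert i Y ∧
      (∀ w : N → ℝ, ∑ e ∈ X', w e + ∑ e ∈ Y', w e = ∑ e ∈ X, w e + ∑ e ∈ Y, w e) ∧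
      f X + f Y ≤ f X' + f Y' := by
  obtain ⟨hiX, hiY⟩ := mem_sdiff.1 hi
  have hsum (w : N → ℝ) : ∑ e ∈ X.erase i, w e + ∑ e ∈ insert i Y, w e
      = ∑ e ∈ X, w e + ∑ e ∈ Y, w e := by
    rw [sum_insert hiY, ← sum_erase_add X w hiX]
    ring
  rcases le_max_iff.1 (hf X Y i hi) with h | h
  · exact ⟨_, _, notMem_erase i X, subset_rfl, hsum, h⟩
  by_cases hbot : f X + f Y = ⊥
  · exact ⟨_, _, notMem_erase i X, subset_rfl, hsum, hbot ▸ bot_le⟩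
  obtain ⟨j, hj, hle⟩ := (Finset.le_sup_iff (bot_lt_iff_ne_bot.2 hbot)).1 h
  obtain ⟨hjY, hjX⟩ := mem_sdiff.1 hj
  refine ⟨insert j (X.erase i), (insert i Y).erase j, ?_, erase_subset _ _, fun w => ?_, hle⟩
  · simp [ne_of_mem_of_not_mem hiX hjX]
  · rw [sum_insert (by simp [hjX]), ← hsum w,
      ← sum_erase_add (insert i Y) w (mem_insert_of_mem hjY)]
    ring

variable [Fintype N]

noncomputable def conjugate (f : Finset N → WithBot ℝ) (p : N → ℝ) : WithBot ℝ :=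
  univ.sup fun Z => f Z + ((-∑ e ∈ Z, p e : ℝ) : WithBot ℝ)

lemma le_conjugate (p : N → ℝ) (Z : Finset N) :
    f Z + ((-∑ e ∈ Z, p e : ℝ) : WithBot ℝ) ≤ conjugate f p :=
  le_sup (f := fun Z => f Z + ((-∑ e ∈ Z, p e : ℝ) : WithBot ℝ)) (mem_univ Z)

lemma conjugate_ne_bot {Z : Finset N} (hZ : f Z ≠ ⊥) (p : N → ℝ) : conjugate f p ≠ ⊥ :=
  ne_bot_of_le_ne_bot (by simpa [WithBot.add_eq_bot] using hZ) (le_conjugate p Z)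

lemma conjugate_eq_bot (hf : ∀ Z, f Z = ⊥) (p : N → ℝ) : conjugate f p = ⊥ := by
  simp [conjugate, hf]

lemma conjugate_add_conjugate_le {p p' : N → ℝ} {c : WithBot ℝ}
    (h : ∀ A B, (f A + ((-∑ e ∈ A, p e : ℝ) : WithBot ℝ))
      + (f B + ((-∑ e ∈ B, p' e : ℝ) : WithBot ℝ)) ≤ c) :
    conjugate f p + conjugate f p' ≤ c := by
  obtain ⟨A, -, hA⟩ := exists_mem_eq_sup univ univ_nonempty
    fun Z => f Z + ((-∑ e ∈ Z, p e : ℝ) : WithBot ℝ)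
  obtain ⟨B, -, hB⟩ := exists_mem_eq_sup univ univ_nonempty
    fun Z => f Z + ((-∑ e ∈ Z, p' e : ℝ) : WithBot ℝ)
  rw [conjugate, conjugate, hA, hB]
  exact h A B

lemma add_le_conjugate_add_conjugate {a : WithBot ℝ} {A B : Finset N} {p p' : N → ℝ} {c : ℝ}
    (ha : a ≤ f A + f B) (hc : c ≤ -∑ e ∈ A, p e - ∑ e ∈ B, p' e) :
    a + c ≤ conjugate f p + conjugate f p' := calc
  a + c ≤ (f A + f B) + ((-∑ e ∈ A, p e - ∑ e ∈ B, p' e : ℝ) : WithBot ℝ) :=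
    add_le_add ha (WithBot.coe_le_coe.2 hc)
  _ = (f A + ((-∑ e ∈ A, p e : ℝ) : WithBot ℝ)) + (f B + ((-∑ e ∈ B, p' e : ℝ) : WithBot ℝ)) := by
    rw [WithBot.add_coe_add_add_coe, sub_eq_add_neg]
  _ ≤ conjugate f p + conjugate f p' := add_le_add (le_conjugate p A) (le_conjugate p' B)

theorem MExc.conjugate_add_single_add_single_le [DecidableEq N] (hf : MExc f) (p : N → ℝ)
    {i j : N} (hij : i ≠ j) {s t : ℝ} (hs : 0 ≤ s) (ht : 0 ≤ t) :
    conjugate f p + conjugate f (p + Pi.single i s + Pi.single j t)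
      ≤ conjugate f (p + Pi.single i s) + conjugate f (p + Pi.single j t) := by
  refine conjugate_add_conjugate_le fun B A => ?_
  rw [WithBot.add_coe_add_add_coe]
  by_cases hjA : j ∈ A ∨ j ∉ B
  · refine add_le_conjugate_add_conjugate (add_comm _ _).le ?_
    rcases hjA with h | h <;> simp only [sum_add_single, h, if_true, if_false] <;> split_ifs <;>
      linarith
  by_cases hiA : i ∈ A ∨ i ∉ B
  · refine add_le_conjugate_add_conjugate le_rfl ?_
    rcases hiA with h | h <;> simp only [sum_add_single, h, if_true, if_false] <;> split_ifs <;>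
      linarith
  push Not at hjA hiA
  obtain ⟨B', A', hiB', hA', hsum, hle⟩ := hf.exists_exchange (mem_sdiff.2 ⟨hiA.2, hiA.1⟩)
  have hjA' : j ∉ A' := fun h => (mem_insert.1 (hA' h)).elim (fun h => hij h.symm) hjA.1
  refine add_le_conjugate_add_conjugate hle ?_
  simp only [sum_add_single, hiB', hjA', hiA.1, hjA.1, if_false]
  linarith [hsum p]

theorem MExc.conjugate_sup_add_conjugate_inf_le [DecidableEq N] (hf : MExc f) (p p' : N → ℝ) :
    conjugate f (p ⊔ p') + conjugate f (p ⊓ p') ≤ conjugate f p + conjugate f p' := by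
  by_cases hdom : ∃ Z, f Z ≠ ⊥
  · obtain ⟨Z, hZ⟩ := hdom
    let φ p := (conjugate f p).unbot (conjugate_ne_bot hZ p)
    have hφ (p : N → ℝ) : conjugate f p = φ p := (WithBot.coe_unbot _ _).symm
    simp only [hφ, ← WithBot.coe_add, WithBot.coe_le_coe]
    refine sup_add_inf_le_of_hasDecreasingDiff_single (fun i j hij s t hs ht u => ?_) p p'
    simpa only [hφ, ← WithBot.coe_add, WithBot.coe_le_coe] using
      hf.conjugate_add_single_add_single_le u hij hs ht
  · push Not at hdom
    simp [conjugate_eq_bot hdom]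

end Conjugate

section Penalty

variable {N : Type*} [DecidableEq N]

/-- For large `M` this stands in for the weight that is `-∞` on `A`, `q` on `D` and `+∞`
elsewhere, which would confine the conjugate to the sets between `A` and `A ∪ D`. -/
def penalty (A D : Finset N) (M : ℝ) (q : N → ℝ) : N → ℝ :=
  fun e => if e ∈ A then -M else if e ∈ D then q e else M

variable {A B D J Z : Finset N} {M : ℝ} {q : N → ℝ}

lemma penalty_sup_penalty (hM : 0 ≤ M) (hA : Disjoint A D) (hB : Disjoint B D) :
    penalty A D M q ⊔ penalty B D M q = penalty (A ∩ B) D M q := by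
  funext e
  have hAe : e ∈ A → e ∉ D := fun h => disjoint_left.1 hA h
  have hBe : e ∈ B → e ∉ D := fun h => disjoint_left.1 hB h
  simp only [Pi.sup_apply, penalty, mem_inter]
  split_ifs <;> simp_all

lemma penalty_inf_penalty (hM : 0 ≤ M) (hA : Disjoint A D) (hB : Disjoint B D) :
    penalty A D M q ⊓ penalty B D M q = penalty (A ∪ B) D M q := by
  funext e
  have hAe : e ∈ A → e ∉ D := fun h => disjoint_left.1 hA h
  have hBe : e ∈ B → e ∉ D := fun h => disjoint_left.1 hB h
  simp only [Pi.inf_apply, penalty, mem_union]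
  split_ifs <;> simp_all

lemma sum_penalty (A D : Finset N) (M : ℝ) (q : N → ℝ) (Z : Finset N) :
    ∑ e ∈ Z, penalty A D M q e
      = -(M * #(Z ∩ A)) + ∑ e ∈ (Z \ A) ∩ D, q e + M * #((Z \ A) \ D) := by
  simp only [penalty]
  rw [sum_ite, sum_ite, filter_mem_eq_inter, filter_notMem_eq_sdiff, filter_mem_eq_inter,
    filter_notMem_eq_sdiff]
  simp [add_assoc, mul_comm]

lemma sum_penalty_union (hAD : Disjoint A D) (hJ : J ⊆ D) :
    ∑ e ∈ A ∪ J, penalty A D M q e = -(M * #A) + ∑ j ∈ J, q j := by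
  rw [sum_penalty, union_inter_cancel_left, union_sdiff_cancel_left (hAD.mono_right hJ),
    inter_eq_left.2 hJ, sdiff_eq_empty_iff_subset.2 hJ]
  simp

lemma card_inter_lt_of_notMem_Icc (hZ : Z ∉ Set.Icc A (A ∪ D)) :
    #(Z ∩ A) < #A + #((Z \ A) \ D) := by
  by_cases hAZ : A ⊆ Z
  · obtain ⟨z, hz, hzAD⟩ := not_subset.1 fun h => hZ ⟨hAZ, h⟩
    have hpos : 0 < #((Z \ A) \ D) := card_pos.2 ⟨z, by simp_all⟩
    have := card_le_card (inter_subset_right : Z ∩ A ⊆ A)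
    omega
  · have := card_lt_card (Finset.ssubset_iff_subset_ne.2
      ⟨inter_subset_right, fun h => hAZ (inter_eq_right.1 h)⟩)
    omega

lemma neg_sum_penalty_le (hM : 0 ≤ M) (hZ : Z ∉ Set.Icc A (A ∪ D)) :
    -∑ e ∈ Z, penalty A D M q e ≤ M * #A - M + ∑ j ∈ D, |q j| := by
  have hcard : (#(Z ∩ A) : ℝ) + 1 ≤ #A + #((Z \ A) \ D) := by
    exact_mod_cast card_inter_lt_of_notMem_Icc hZ
  have := neg_sum_le_sum_abs_of_subset (inter_subset_right : (Z \ A) ∩ D ⊆ D) q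
  rw [sum_penalty]
  nlinarith [mul_le_mul_of_nonneg_left hcard hM]

end Penalty

section IntervalConjugate

variable {N : Type*} [DecidableEq N] {f : Finset N → WithBot ℝ}

noncomputable def intervalConjugate (f : Finset N → WithBot ℝ) (A D : Finset N) (q : N → ℝ) :
    WithBot ℝ :=
  D.powerset.sup fun J => f (A ∪ J) + ((-∑ j ∈ J, q j : ℝ) : WithBot ℝ)

variable {A D J : Finset N} {q : N → ℝ}

lemma le_intervalConjugate (hJ : J ⊆ D) :
    f (A ∪ J) + ((-∑ j ∈ J, q j : ℝ) : WithBot ℝ) ≤ intervalConjugate f A D q :=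
  le_sup (f := fun J => f (A ∪ J) + ((-∑ j ∈ J, q j : ℝ) : WithBot ℝ)) (mem_powerset.2 hJ)

lemma intervalConjugate_le {F : ℝ} (hF : ∀ Z, f Z ≤ F) :
    intervalConjugate f A D q ≤ ((F + ∑ j ∈ D, |q j| : ℝ) : WithBot ℝ) :=
  Finset.sup_le fun J hJ => by
    rw [WithBot.coe_add]
    exact add_le_add (hF _)
      (WithBot.coe_le_coe.2 (neg_sum_le_sum_abs_of_subset (mem_powerset.1 hJ) q))

lemma intervalConjugate_add_sum_le (f : Finset N → WithBot ℝ) (A D : Finset N) (q : N → ℝ) :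
    intervalConjugate f A D q + ((∑ j ∈ D, q j : ℝ) : WithBot ℝ)
      ≤ D.powerset.sup fun J => f (A ∪ (D \ J)) + ((∑ j ∈ J, q j : ℝ) : WithBot ℝ) := by
  obtain ⟨J, hJ, hsup⟩ := exists_mem_eq_sup D.powerset (powerset_nonempty D)
    fun J => f (A ∪ J) + ((-∑ j ∈ J, q j : ℝ) : WithBot ℝ)
  have hJD := mem_powerset.1 hJ
  calc intervalConjugate f A D q + ((∑ j ∈ D, q j : ℝ) : WithBot ℝ)
      = f (A ∪ (D \ (D \ J))) + ((∑ j ∈ D \ J, q j : ℝ) : WithBot ℝ) := by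
        rw [intervalConjugate, hsup, Finset.sdiff_sdiff_eq_self hJD, sum_sdiff_eq_sub hJD,
          add_assoc, ← WithBot.coe_add]
        ring_nf
    _ ≤ _ := le_sup (f := fun J => f (A ∪ (D \ J)) + ((∑ j ∈ J, q j : ℝ) : WithBot ℝ))
        (mem_powerset.2 sdiff_subset)

variable [Fintype N] {M : ℝ}

lemma intervalConjugate_add_le_conjugate_penalty (hAD : Disjoint A D) :
    intervalConjugate f A D q + ((M * #A : ℝ) : WithBot ℝ) ≤ conjugate f (penalty A D M q) := by
  obtain ⟨J, hJ, hsup⟩ := exists_mem_eq_sup D.powerset (powerset_nonempty D)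
    fun J => f (A ∪ J) + ((-∑ j ∈ J, q j : ℝ) : WithBot ℝ)
  rw [intervalConjugate, hsup, add_assoc, ← WithBot.coe_add]
  convert le_conjugate (penalty A D M q) (A ∪ J) using 3
  rw [sum_penalty_union hAD (mem_powerset.1 hJ)]
  ring

lemma conjugate_penalty_le {F : ℝ} (hAD : Disjoint A D) (hF : ∀ Z, f Z ≤ F) (hM : 0 ≤ M) :
    conjugate f (penalty A D M q)
      ≤ max (intervalConjugate f A D q) ((F + ∑ j ∈ D, |q j| - M : ℝ) : WithBot ℝ)
        + ((M * #A : ℝ) : WithBot ℝ) := by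
  refine Finset.sup_le fun Z _ => ?_
  by_cases hZ : Z ∈ Set.Icc A (A ∪ D)
  · obtain ⟨J, hJ, rfl⟩ : ∃ J ⊆ D, A ∪ J = Z :=
      ⟨Z \ A, sdiff_le_iff.2 hZ.2, union_sdiff_of_subset hZ.1⟩
    calc f (A ∪ J) + ((-∑ e ∈ A ∪ J, penalty A D M q e : ℝ) : WithBot ℝ)
        = f (A ∪ J) + ((-∑ j ∈ J, q j : ℝ) : WithBot ℝ) + ((M * #A : ℝ) : WithBot ℝ) := by
          rw [sum_penalty_union hAD hJ, add_assoc, ← WithBot.coe_add]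
          ring_nf
      _ ≤ _ := add_le_add_left (le_max_of_le_left (le_intervalConjugate hJ)) _
  · calc f Z + ((-∑ e ∈ Z, penalty A D M q e : ℝ) : WithBot ℝ)
        ≤ F + ((M * #A - M + ∑ j ∈ D, |q j| : ℝ) : WithBot ℝ) :=
          add_le_add (hF Z) (WithBot.coe_le_coe.2 (neg_sum_penalty_le hM hZ))
      _ = ((F + ∑ j ∈ D, |q j| - M : ℝ) : WithBot ℝ) + ((M * #A : ℝ) : WithBot ℝ) := by
          rw [← WithBot.coe_add, ← WithBot.coe_add]
          ring_nf
      _ ≤ _ := add_le_add_left (le_max_right _ _) _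

theorem MExc.intervalConjugate_union_add_inter_le {K L : Finset N} (hf : MExc f)
    (hKD : Disjoint K D) (hLD : Disjoint L D) (q : N → ℝ) :
    intervalConjugate f (K ∪ L) D q + intervalConjugate f (K ∩ L) D q
      ≤ intervalConjugate f K D q + intervalConjugate f L D q := by
  by_cases hbot : intervalConjugate f (K ∪ L) D q + intervalConjugate f (K ∩ L) D q = ⊥
  · exact hbot ▸ bot_le
  obtain ⟨r, hr⟩ := WithBot.ne_bot_iff_exists.1 hbot
  obtain ⟨F, hF⟩ := exists_forall_le_coe f
  set T := F + ∑ j ∈ D, |q j|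
  obtain ⟨M, hM, hMr⟩ : ∃ M : ℝ, 0 ≤ M ∧ T + (T - M) < r :=
    ⟨max 0 (2 * T - r) + 1, by positivity, by linarith [le_max_right 0 (2 * T - r)]⟩
  rw [← hr]
  refine WithBot.coe_le_add_of_le_max_add_max (intervalConjugate_le hF) (intervalConjugate_le hF)
    (by linarith) hMr <|
    (WithBot.add_le_add_iff_right (WithBot.coe_ne_bot (a := M * #K + M * #L))).1 ?_
  calc (r : WithBot ℝ) + ((M * #K + M * #L : ℝ) : WithBot ℝ)
      = (intervalConjugate f (K ∪ L) D q + ((M * #(K ∪ L) : ℝ) : WithBot ℝ))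
        + (intervalConjugate f (K ∩ L) D q + ((M * #(K ∩ L) : ℝ) : WithBot ℝ)) := by
        rw [WithBot.add_coe_add_add_coe, hr, ← mul_add, ← mul_add, ← Nat.cast_add,
          ← Nat.cast_add, card_union_add_card_inter]
    _ ≤ conjugate f (penalty (K ∪ L) D M q) + conjugate f (penalty (K ∩ L) D M q) :=
        add_le_add (intervalConjugate_add_le_conjugate_penalty (disjoint_union_left.2 ⟨hKD, hLD⟩))
          (intervalConjugate_add_le_conjugate_penalty (hKD.mono_left inter_subset_left))
    _ ≤ conjugate f (penalty K D M q) + conjugate f (penalty L D M q) := by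
        rw [← penalty_sup_penalty hM hKD hLD, ← penalty_inf_penalty hM hKD hLD, add_comm]
        exact hf.conjugate_sup_add_conjugate_inf_le _ _
    _ ≤ _ := (add_le_add (conjugate_penalty_le hKD hF hM) (conjugate_penalty_le hLD hF hM)).trans_eq
        (WithBot.add_coe_add_add_coe _ _ _ _)

end IntervalConjugate

theorem conjugate_lower_bound_general {N : Type*} [Fintype N] [DecidableEq N]
    (f : Finset N → WithBot ℝ) (hf : MExc f)
    (X Y : Finset N)
    (I : Finset N) (hI : I ⊆ X \ Y) (q : N → ℝ) :
    f X + f Y ≤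
      ((Y \ X).powerset.sup fun J =>
          f (((X \ Y) \ I) ∪ (X ∩ Y) ∪ J) + ((-(∑ j ∈ J, q j) : ℝ) : WithBot ℝ))
        + ((Y \ X).powerset.sup fun J =>
            f (I ∪ (X ∩ Y) ∪ ((Y \ X) \ J)) + (((∑ j ∈ J, q j) : ℝ) : WithBot ℝ)) := by
  set D := Y \ X
  set K := (X \ Y) \ I ∪ X ∩ Y
  set L := I ∪ X ∩ Y
  have hKD : Disjoint K D := by simp only [K, D, disjoint_left]; grind
  have hLD : Disjoint L D := by simp only [L, D, disjoint_left]; grind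
  have hKL : K ∪ L = X := by ext; simp only [K, L, mem_union, mem_sdiff, mem_inter]; grind
  have hKL' : K ∩ L = X ∩ Y := by ext; simp only [K, L, mem_union, mem_inter, mem_sdiff]; grind
  have hY : X ∩ Y ∪ D = Y := by rw [inter_comm, union_comm, sdiff_union_inter]
  calc f X + f Y = (f (X ∪ ∅) + ((-∑ j ∈ ∅, q j : ℝ) : WithBot ℝ))
        + (f (X ∩ Y ∪ D) + ((-∑ j ∈ D, q j : ℝ) : WithBot ℝ))
        + ((∑ j ∈ D, q j : ℝ) : WithBot ℝ) := by
        rw [union_empty, hY, WithBot.add_coe_add_add_coe, add_assoc, ← WithBot.coe_add]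
        simp
    _ ≤ intervalConjugate f X D q + intervalConjugate f (X ∩ Y) D q
        + ((∑ j ∈ D, q j : ℝ) : WithBot ℝ) :=
        add_le_add_left (add_le_add (le_intervalConjugate (empty_subset D))
          (le_intervalConjugate subset_rfl)) _
    _ ≤ intervalConjugate f K D q + intervalConjugate f L D q
        + ((∑ j ∈ D, q j : ℝ) : WithBot ℝ) := by
        rw [← hKL', ← hKL]
        exact add_le_add_left (hf.intervalConjugate_union_add_inter_le hKD hLD q) _
    _ ≤ _ := by
        rw [add_assoc]
        exact add_le_add_right (intervalConjugate_add_sum_le f L D q) _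

theorem conjugate_lower_bound {N : Type*} [Fintype N] [DecidableEq N]
    (f : Finset N → WithBot ℝ) (hdom : ∃ Z, f Z ≠ ⊥) (hf : MExc f)
    (X Y : Finset N) (hX : f X ≠ ⊥) (hY : f Y ≠ ⊥)
    (I : Finset N) (hI : I ⊆ X \ Y) (q : N → ℝ) :
    f X + f Y ≤
      ((Y \ X).powerset.sup fun J =>
          f (((X \ Y) \ I) ∪ (X ∩ Y) ∪ J) + ((-(∑ j ∈ J, q j) : ℝ) : WithBot ℝ))
        + ((Y \ X).powerset.sup fun J =>
            f (I ∪ (X ∩ Y) ∪ ((Y \ X) \ J)) + (((∑ j ∈ J, q j) : ℝ) : WithBot ℝ)) :=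
  conjugate_lower_bound_general f hf X Y I hI q
end

section
/- If a set function f : 2^N → ℝ ∪ {-∞} with dom f ≠ ∅ satisfies the strong no complementarities property (SNC), then it satisfies the simultaneous no complementarities property (NCsim). -/
open Finset

/-- Demand correspondence: the maximizers of `f(Z) - p(Z)` over all `Z ⊆ N`. -/
def Demand {N : Type*} (f : Finset N → WithBot ℝ) (p : N → ℝ) : Set (Finset N) :=
  {X | ∀ Z : Finset N, f Z + ((-(∑ i ∈ Z, p i) : ℝ) : WithBot ℝ)
        ≤ f X + ((-(∑ i ∈ X, p i) : ℝ) : WithBot ℝ)}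

/-- (SNC): strong no complementarities property. -/
def SNC {N : Type*} [DecidableEq N] (f : Finset N → WithBot ℝ) : Prop :=
  ∀ X Y : Finset N, ∀ I ⊆ X \ Y, ∃ J ⊆ Y \ X,
    f X + f Y ≤ f ((X \ I) ∪ J) + f ((Y \ J) ∪ I)

/-- (NCsim): simultaneous no complementarities property. -/
def NCsim {N : Type*} [DecidableEq N] (f : Finset N → WithBot ℝ) : Prop :=
  ∀ p : N → ℝ, ∀ X ∈ Demand f p, ∀ Y ∈ Demand f p, ∀ I ⊆ X \ Y,
    ∃ J ⊆ Y \ X, (X \ I) ∪ J ∈ Demand f p ∧ (Y \ J) ∪ I ∈ Demand f p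

/-!
Fix prices `p` and write `u(Z) = f(Z) - p(Z)`. Exchanging `I ⊆ X \ Y` against `J ⊆ Y \ X`,
i.e. passing to `X' = (X \ I) ∪ J` and `Y' = (Y \ J) ∪ I`, does not change `p(X) + p(Y)`,
so the SNC inequality for `f` is also one for `u`: `u(X) + u(Y) ≤ u(X') + u(Y')`.
If `X` and `Y` both attain the maximum `m` of `u`, then `u(X'), u(Y') ≤ m` forces
`u(X') = u(Y') = m`, i.e. both exchanged bundles are demanded.
-/

theorem WithBot.eq_of_le_of_le_of_add_le {α : Type*} [AddCommMonoid α] [LinearOrder α]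
    [IsOrderedCancelAddMonoid α] {a b m : WithBot α} (ha : a ≤ m) (hb : b ≤ m)
    (h : m + m ≤ a + b) : a = m := by
  refine ha.antisymm (not_lt.mp fun hlt => ?_)
  have hb_ne : b ≠ ⊥ := by
    rintro rfl
    rw [WithBot.add_bot, le_bot_iff, WithBot.add_eq_bot, or_self] at h
    exact not_lt_bot (h ▸ hlt)
  exact (WithBot.add_lt_add_of_lt_of_le hb_ne hlt hb).not_ge h

theorem Finset.sum_sdiff_union_add_sum_sdiff_union {N M : Type*} [DecidableEq N]
    [AddCommMonoid M] (g : N → M) {X Y I J : Finset N} (hI : I ⊆ X \ Y) (hJ : J ⊆ Y \ X) :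
    ∑ i ∈ X \ I ∪ J, g i + ∑ i ∈ Y \ J ∪ I, g i = ∑ i ∈ X, g i + ∑ i ∈ Y, g i := by
  rw [sum_union (disjoint_sdiff.mono sdiff_subset hJ),
    sum_union (disjoint_sdiff.mono sdiff_subset hI), ← sum_sdiff (hI.trans sdiff_subset),
    ← sum_sdiff (hJ.trans sdiff_subset)]
  abel

section Demand

variable {N : Type*} (f : Finset N → WithBot ℝ) (p : N → ℝ)

def netValue (Z : Finset N) : WithBot ℝ :=
  f Z + ((-(∑ i ∈ Z, p i) : ℝ) : WithBot ℝ)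

variable {f p}

theorem netValue_le_of_mem_demand {X : Finset N} (hX : X ∈ Demand f p) (Z : Finset N) :
    netValue f p Z ≤ netValue f p X :=
  hX Z

theorem mem_demand_of_netValue_eq {X Z : Finset N} (hX : X ∈ Demand f p)
    (h : netValue f p Z = netValue f p X) : Z ∈ Demand f p :=
  fun W => (netValue_le_of_mem_demand hX W).trans_eq h.symm

theorem netValue_add_netValue (X Y : Finset N) :
    netValue f p X + netValue f p Y =
      f X + f Y + ((-(∑ i ∈ X, p i + ∑ i ∈ Y, p i) : ℝ) : WithBot ℝ) := by
  rw [netValue, netValue, add_add_add_comm, neg_add, WithBot.coe_add]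

theorem mem_demand_of_netValue_add_le {X Y X' Y' : Finset N} (hX : X ∈ Demand f p)
    (hY : Y ∈ Demand f p)
    (h : netValue f p X + netValue f p Y ≤ netValue f p X' + netValue f p Y') :
    X' ∈ Demand f p ∧ Y' ∈ Demand f p := by
  have hYX : netValue f p Y = netValue f p X :=
    (netValue_le_of_mem_demand hX Y).antisymm (netValue_le_of_mem_demand hY X)
  rw [hYX] at h
  have hX' := netValue_le_of_mem_demand hX X'
  have hY' := netValue_le_of_mem_demand hX Y'
  exact ⟨mem_demand_of_netValue_eq hX (WithBot.eq_of_le_of_le_of_add_le hX' hY' h),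
    mem_demand_of_netValue_eq hX
      (WithBot.eq_of_le_of_le_of_add_le hY' hX' (h.trans_eq (add_comm _ _)))⟩

theorem netValue_add_le_of_exchange [DecidableEq N] {X Y I J : Finset N} (hI : I ⊆ X \ Y)
    (hJ : J ⊆ Y \ X) (h : f X + f Y ≤ f (X \ I ∪ J) + f (Y \ J ∪ I)) :
    netValue f p X + netValue f p Y ≤ netValue f p (X \ I ∪ J) + netValue f p (Y \ J ∪ I) := by
  rw [netValue_add_netValue, netValue_add_netValue, sum_sdiff_union_add_sum_sdiff_union p hI hJ]
  gcongr

end Demand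

theorem snc_implies_ncsim_general {N : Type*} [DecidableEq N]
    (f : Finset N → WithBot ℝ) (hf : SNC f) :
    NCsim f := by
  intro p X hX Y hY I hI
  obtain ⟨J, hJ, hfJ⟩ := hf X Y I hI
  exact ⟨J, hJ, mem_demand_of_netValue_add_le hX hY (netValue_add_le_of_exchange hI hJ hfJ)⟩

theorem snc_implies_ncsim {N : Type*} [Fintype N] [DecidableEq N]
    (f : Finset N → WithBot ℝ) (hdom : ∃ X, f X ≠ ⊥) (hf : SNC f) :
    NCsim f :=
  snc_implies_ncsim_general f hf
end

section
/- For a set family F ⊆ 2^N on a finite set N, the multiple exchange property (B♮-EXC_m) implies the exchange property (B♮-EXC). -/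
open Finset

/-- (B♮-EXC_m): multiple exchange property for set families. -/
def BExcM {N : Type*} [DecidableEq N] (F : Set (Finset N)) : Prop :=
  ∀ X ∈ F, ∀ Y ∈ F, ∀ I ⊆ X \ Y, ∃ J ⊆ Y \ X,
    (X \ I) ∪ J ∈ F ∧ (Y \ J) ∪ I ∈ F

/-- (B♮-EXC): exchange property for set families. -/
def BExc {N : Type*} [DecidableEq N] (F : Set (Finset N)) : Prop :=
  ∀ X ∈ F, ∀ Y ∈ F, ∀ i ∈ X \ Y,
    (X.erase i ∈ F ∧ insert i Y ∈ F) ∨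
      ∃ j ∈ Y \ X, insert j (X.erase i) ∈ F ∧ (insert i Y).erase j ∈ F

/-!
Given `i ∈ X \ Y`, (B♮-EXC_m) with `I = {i}` yields `J ⊆ Y \ X` with `X - i + J ∈ F` and
`Y - J + i ∈ F`. Shrink such a `J` one element `j` at a time: exchanging `J - j` between
`X - i + J` and `X`, and between `Y` and `Y - J + i`, leaves in each case only the choice whether
`i` moves as well. Of the four outcomes, one says that `j` is the element (B♮-EXC) asks for and one
that `J - j` is again such a set. In the other two, `Y - j ∈ F` (resp. `X + j ∈ F`), the exchange
for the pair `(X, Y - j)` (resp. `(X + j, Y)`) is available by induction on `|Y \ X|`, and one more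
single-element exchange transports it back to `(X, Y)`.
-/

section

variable {N : Type*} [DecidableEq N]

def ExchangeAt (F : Set (Finset N)) (X Y : Finset N) (i : N) : Prop :=
  (X.erase i ∈ F ∧ insert i Y ∈ F) ∨
    ∃ j ∈ Y \ X, insert j (X.erase i) ∈ F ∧ (insert i Y).erase j ∈ F

variable {F : Set (Finset N)} {X Y I J : Finset N} {i j a : N}

namespace BExcM

theorem exchange_of_sdiff_subset_singleton (hF : BExcM F) (hX : X ∈ F) (hY : Y ∈ F)
    (hI : I ⊆ X \ Y) (ha : Y \ X ⊆ {a}) :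
    (X \ I ∈ F ∧ Y ∪ I ∈ F) ∨ (insert a (X \ I) ∈ F ∧ Y.erase a ∪ I ∈ F) := by
  obtain ⟨J, hJ, h₁, h₂⟩ := hF X hX Y hY I hI
  rcases subset_singleton_iff.mp (hJ.trans ha) with rfl | rfl
  · simp_all
  · rw [union_singleton, sdiff_singleton_eq_erase] at *
    exact Or.inr ⟨h₁, h₂⟩

theorem exchangeAt_of_exchangeAt_erase (hF : BExcM F) (hY : Y ∈ F) (hiY : i ∉ Y)
    (hj : j ∈ Y \ X) (hXj : insert j (X.erase i) ∈ F) (h : ExchangeAt F X (Y.erase j) i) :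
    ExchangeAt F X Y i := by
  rcases h with ⟨-, hYi⟩ | ⟨k, hk, hXk, hB⟩
  · refine Or.inr ⟨j, hj, hXj, ?_⟩
    convert hYi using 1; ext; grind
  · have hjB : {j} ⊆ Y \ (insert i (Y.erase j)).erase k := by intro; grind
    have hBY : (insert i (Y.erase j)).erase k \ Y ⊆ {i} := by intro; grind
    rcases hF.exchange_of_sdiff_subset_singleton hY hB hjB hBY with ⟨-, hYk⟩ | ⟨hYj, -⟩
    · refine Or.inr ⟨k, by grind, hXk, ?_⟩
      convert hYk using 1; ext; grind
    · refine Or.inr ⟨j, hj, hXj, ?_⟩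
      convert hYj using 1; ext; grind

theorem exchangeAt_of_exchangeAt_insert (hF : BExcM F) (hX : X ∈ F) (hiX : i ∈ X)
    (hj : j ∈ Y \ X) (hYj : (insert i Y).erase j ∈ F) (h : ExchangeAt F (insert j X) Y i) :
    ExchangeAt F X Y i := by
  rcases h with ⟨hXi, -⟩ | ⟨k, hk, hA, hYk⟩
  · refine Or.inr ⟨j, hj, ?_, hYj⟩
    convert hXi using 1; ext; grind
  · have hjA : {j} ⊆ insert k ((insert j X).erase i) \ X := by intro; grind
    have hXA : X \ insert k ((insert j X).erase i) ⊆ {i} := by intro; grind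
    rcases hF.exchange_of_sdiff_subset_singleton hA hX hjA hXA with ⟨hXk, -⟩ | ⟨-, hXj⟩
    · refine Or.inr ⟨k, by grind, ?_, hYk⟩
      convert hXk using 1; ext; grind
    · refine Or.inr ⟨j, hj, ?_, hYj⟩
      convert hXj using 1; ext; grind

theorem exchangeAt_or_erase (hF : BExcM F) (hX : X ∈ F) (hY : Y ∈ F) (hi : i ∈ X \ Y)
    (hJ : J ⊆ Y \ X) (hj : j ∈ J) (hP : X.erase i ∪ J ∈ F) (hQ : insert i (Y \ J) ∈ F)
    (ih_erase : Y.erase j ∈ F → ExchangeAt F X (Y.erase j) i)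
    (ih_insert : insert j X ∈ F → ExchangeAt F (insert j X) Y i) :
    ExchangeAt F X Y i ∨ (X.erase i ∪ J.erase j ∈ F ∧ insert i (Y \ J.erase j) ∈ F) := by
  have hjYX : j ∈ Y \ X := hJ hj
  have hIP : J.erase j ⊆ (X.erase i ∪ J) \ X := by intro; grind
  have hXP : X \ (X.erase i ∪ J) ⊆ {i} := by intro; grind
  have hIQ : J.erase j ⊆ Y \ insert i (Y \ J) := by intro; grind
  have hQY : insert i (Y \ J) \ Y ⊆ {i} := by intro; grind
  have eP₁ : (X.erase i ∪ J) \ J.erase j = insert j (X.erase i) := by ext; grind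
  have eP₂ : insert i ((X.erase i ∪ J) \ J.erase j) = insert j X := by ext; grind
  have eQ₁ : insert i (Y \ J) ∪ J.erase j = (insert i Y).erase j := by ext; grind
  have eQ₂ : (insert i (Y \ J)).erase i ∪ J.erase j = Y.erase j := by ext; grind
  rcases hF.exchange_of_sdiff_subset_singleton hP hX hIP hXP with ⟨hXj, -⟩ | ⟨hXj, hP'⟩ <;>
  rcases hF.exchange_of_sdiff_subset_singleton hY hQ hIQ hQY with ⟨-, hYj⟩ | ⟨hQ', hYj⟩
  · rw [eP₁] at hXj; rw [eQ₁] at hYj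
    exact Or.inl (Or.inr ⟨j, hjYX, hXj, hYj⟩)
  · rw [eP₁] at hXj; rw [eQ₂] at hYj
    exact Or.inl <|
      hF.exchangeAt_of_exchangeAt_erase hY (mem_sdiff.mp hi).2 hjYX hXj (ih_erase hYj)
  · rw [eP₂] at hXj; rw [eQ₁] at hYj
    exact Or.inl <|
      hF.exchangeAt_of_exchangeAt_insert hX (mem_sdiff.mp hi).1 hjYX hYj (ih_insert hXj)
  · exact Or.inr ⟨hP', hQ'⟩

theorem exchangeAt_of_multiple_exchange (hF : BExcM F) (hX : X ∈ F) (hY : Y ∈ F)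
    (hi : i ∈ X \ Y)
    (ih_erase : ∀ j ∈ Y \ X, Y.erase j ∈ F → ExchangeAt F X (Y.erase j) i)
    (ih_insert : ∀ j ∈ Y \ X, insert j X ∈ F → ExchangeAt F (insert j X) Y i)
    (hJ : J ⊆ Y \ X) (hP : X.erase i ∪ J ∈ F) (hQ : insert i (Y \ J) ∈ F) :
    ExchangeAt F X Y i := by
  induction J using Finset.strongInduction with
  | H J ihJ =>
    rcases J.eq_empty_or_nonempty with rfl | ⟨j, hj⟩
    · exact Or.inl ⟨by simpa using hP, by simpa using hQ⟩
    · rcases hF.exchangeAt_or_erase hX hY hi hJ hj hP hQ (ih_erase j (hJ hj))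
        (ih_insert j (hJ hj)) with h | ⟨hP', hQ'⟩
      · exact h
      · exact ihJ _ (erase_ssubset hj) ((erase_subset _ _).trans hJ) hP' hQ'

theorem exchangeAt (hF : BExcM F) (hX : X ∈ F) (hY : Y ∈ F) (hi : i ∈ X \ Y) :
    ExchangeAt F X Y i := by
  induction hn : (Y \ X).card using Nat.strong_induction_on generalizing X Y with
  | _ n ih =>
    obtain ⟨J, hJ, hP, hQ⟩ := hF X hX Y hY {i} (singleton_subset_iff.mpr hi)
    refine hF.exchangeAt_of_multiple_exchange hX hY hi (fun j hj hYj => ?_)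
      (fun j hj hXj => ?_) hJ (by rwa [← sdiff_singleton_eq_erase]) (by rwa [← union_singleton])
    · refine ih _ ?_ hX hYj (by grind) rfl
      rw [← hn, erase_sdiff_comm]; exact card_erase_lt_of_mem hj
    · refine ih _ ?_ hXj hY (by grind) rfl
      rw [← hn, sdiff_insert]; exact card_erase_lt_of_mem hj

end BExcM

end

theorem bexcm_implies_bexc_general {N : Type*} [DecidableEq N]
    (F : Set (Finset N)) (hF : BExcM F) : BExc F :=
  fun _ hX _ hY _ hi => hF.exchangeAt hX hY hi

theorem bexcm_implies_bexc {N : Type*} [Fintype N] [DecidableEq N]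
    (F : Set (Finset N)) (hF : BExcM F) : BExc F :=
  bexcm_implies_bexc_general F hF
end

section
/- For a set family F ⊆ 2^N on a finite set N, the multiple exchange property (B♮-EXC_m) implies the one-sided exchange property (B♮-EXC±). -/
open Finset

/-- (B♮-EXC±): one-sided exchange property for set families. -/
def BExcPm {N : Type*} [DecidableEq N] (F : Set (Finset N)) : Prop :=
  ∀ X ∈ F, ∀ Y ∈ F, ∀ i ∈ X \ Y,
    (X.erase i ∈ F ∨ ∃ j ∈ Y \ X, insert j (X.erase i) ∈ F) ∧
      (insert i Y ∈ F ∨ ∃ k ∈ Y \ X, (insert i Y).erase k ∈ F)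

/-!
Part (a): exchanging `I = {i}` between `X` and `Y` gives `(X - i) ∪ J ∈ F` for some `J ⊆ Y \ X`.
The elements of `J` are then removed one at a time: exchanging `J - j` between `(X - i) ∪ J`
and `X`, the only element that can come back is `i`, so either `X - i + j ∈ F` or
`(X - i) ∪ (J - j) ∈ F`.

Part (b) is part (a) for the family of complements, which again has the multiple exchange
property: complementation swaps the roles of `X \ Y` and `Y \ X`.
-/

namespace BExcM

variable {N : Type*} [DecidableEq N] {F : Set (Finset N)}

theorem erase_mem_or_exists_insert_erase_mem_of_union_mem (hF : BExcM F) {X J : Finset N}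
    {i : N} (hX : X ∈ F) (hJX : Disjoint J X) (hXJ : X.erase i ∪ J ∈ F) :
    X.erase i ∈ F ∨ ∃ j ∈ J, insert j (X.erase i) ∈ F := by
  induction J using Finset.induction_on with
  | empty => simpa using hXJ
  | @insert j J hjJ ih =>
    have hJX' : Disjoint J X := disjoint_of_subset_left (subset_insert j J) hJX
    have hI : J ⊆ (X.erase i ∪ insert j J) \ X := fun a ha =>
      mem_sdiff.2 ⟨mem_union_right _ (mem_insert_of_mem ha), disjoint_left.1 hJX' ha⟩
    obtain ⟨J', hJ', hback, hfwd⟩ := hF _ hXJ X hX J hI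
    have hJ'i : J' ⊆ {i} := fun a ha => by
      have := hJ' ha
      grind
    rcases subset_singleton_iff.1 hJ'i with rfl | rfl
    · refine Or.inr ⟨j, mem_insert_self j J, ?_⟩
      convert hback using 1
      ext a
      have := @disjoint_left.1 hJX' a
      grind
    · rw [sdiff_singleton_eq_erase] at hfwd
      exact (ih hJX' hfwd).imp_right fun ⟨k, hk, h⟩ => ⟨k, mem_insert_of_mem hk, h⟩

theorem erase_mem_or_exists_insert_erase_mem (hF : BExcM F) {X Y : Finset N} {i : N}
    (hX : X ∈ F) (hY : Y ∈ F) (hi : i ∈ X \ Y) :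
    X.erase i ∈ F ∨ ∃ j ∈ Y \ X, insert j (X.erase i) ∈ F := by
  obtain ⟨J, hJ, hXJ, -⟩ := hF X hX Y hY {i} (singleton_subset_iff.2 hi)
  rw [sdiff_singleton_eq_erase] at hXJ
  have hJX : Disjoint J X := disjoint_left.2 fun _ ha => (mem_sdiff.1 (hJ ha)).2
  exact (hF.erase_mem_or_exists_insert_erase_mem_of_union_mem hX hJX hXJ).imp_right
    fun ⟨j, hj, h⟩ => ⟨j, hJ hj, h⟩

theorem compl_preimage [Fintype N] (hF : BExcM F) : BExcM (compl ⁻¹' F) := by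
  intro X hX Y hY I hI
  rw [← compl_sdiff_compl] at hI
  obtain ⟨J, hJ, hYJ, hXJ⟩ := hF _ hY _ hX I hI
  rw [compl_sdiff_compl] at hJ
  have hmem : ∀ a, (a ∈ I → a ∉ Y ∧ a ∈ X) ∧ (a ∈ J → a ∈ Y ∧ a ∉ X) := fun a => by
    simpa using And.intro (@hI a) (@hJ a)
  refine ⟨J, hJ, ?_, ?_⟩ <;> rw [Set.mem_preimage]
  · convert hXJ using 1
    ext a
    have := hmem a
    simp only [mem_compl, mem_union, mem_sdiff]
    tauto
  · convert hYJ using 1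
    ext a
    have := hmem a
    simp only [mem_compl, mem_union, mem_sdiff]
    tauto

end BExcM

theorem bexcm_implies_bexcpm {N : Type*} [Fintype N] [DecidableEq N]
    (F : Set (Finset N)) (hF : BExcM F) : BExcPm F := by
  intro X hX Y hY i hi
  refine ⟨hF.erase_mem_or_exists_insert_erase_mem hX hY hi, ?_⟩
  simpa [← compl_insert, ← compl_erase, compl_sdiff_compl, and_comm] using
    hF.compl_preimage.erase_mem_or_exists_insert_erase_mem (X := Yᶜ) (Y := Xᶜ)
      (by simpa using hY) (by simpa using hX) (by rwa [compl_sdiff_compl])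
end

section
/- For a set family F ⊆ 2^N on a finite set N, the one-sided exchange property (B♮-EXC±) holds if and only if the exchange property (B♮-EXC) holds. -/
/-!
Induction on `#(X \ Y) + #(Y \ X)`; let `(X, Y, i)` be a counterexample at minimal
distance. Passing to the family of complements preserves (B♮-EXC±) and swaps the roles of
`X - i` and `Y + i`, so it suffices to show `Y + i ∈ F`: then `X - i ∈ F` as well, and (i)
holds.

If `Y + i ∉ F`, part (b) gives `k` with `Y + i - k ∈ F`, hence `X - i + k ∉ F`, and part (b)
for `(Y, X, k)` gives `X + k ∈ F` or `X - t + k ∈ F` with `t ≠ i`. Exchanging `i` out of such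
a set against `Y` (a closer pair) and then exchanging back against `X` turns `X + p ∈ F` into
`X + u ∈ F` with `X - i + u ∉ F`, but also proves `X - i + p ∈ F`; applied to `p` and then to
`u` this is contradictory, and likewise with `X - t` in place of `X`. When `X \ Y` and
`Y \ X` have at most two elements these comparisons are not with closer pairs; instead (a)
gives `X - i ∈ F`, and the exchange for `(Y, X - i, k)` contradicts `X - i + k ∉ F` and
`X - i + u ∉ F`, where `Y \ X = {k, u}`.
-/

open Finset

section

variable {N : Type*} [DecidableEq N]

def ExchangeBelow (F : Set (Finset N)) (n : ℕ) : Prop :=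
  ∀ X ∈ F, ∀ Y ∈ F, ∀ i ∈ X \ Y, #(X \ Y) + #(Y \ X) < n → ExchangeAt F X Y i

theorem BExc.bExcPm {F : Set (Finset N)} (hF : BExc F) : BExcPm F := by
  intro X hX Y hY i hi
  rcases hF X hX Y hY i hi with ⟨hXi, hYi⟩ | ⟨j, hj, hXj, hYj⟩
  · exact ⟨.inl hXi, .inl hYi⟩
  · exact ⟨.inr ⟨j, hj, hXj⟩, .inr ⟨j, hj, hYj⟩⟩

theorem card_sdiff_add_card_sdiff_lt {X Y Z : Finset N} {k : N} (hk : k ∈ Y \ X)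
    (hZY : Z \ Y ⊆ X \ Y) (hYZ : Y \ Z ⊆ (Y \ X).erase k) :
    #(Z \ Y) + #(Y \ Z) < #(X \ Y) + #(Y \ X) := by
  have h₁ := card_le_card hZY
  have h₂ := card_le_card hYZ
  rw [card_erase_of_mem hk] at h₂
  have := card_pos.2 ⟨k, hk⟩
  omega

section Compl

variable [Fintype N] {F : Set (Finset N)}

theorem BExcPm.preimage_compl (hF : BExcPm F) : BExcPm (compl ⁻¹' F) := by
  intro A hA B hB i hi
  have hi' : i ∈ Bᶜ \ Aᶜ := by rwa [compl_sdiff_compl]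
  obtain ⟨ha, hb⟩ := hF Bᶜ hB Aᶜ hA i hi'
  simp only [Set.mem_preimage, compl_erase, compl_insert, compl_sdiff_compl] at ha hb ⊢
  exact ⟨hb, ha⟩

theorem exchangeAt_preimage_compl_iff {A B : Finset N} {i : N} :
    ExchangeAt (compl ⁻¹' F) A B i ↔ ExchangeAt F Bᶜ Aᶜ i := by
  simp only [ExchangeAt, Set.mem_preimage, compl_erase, compl_insert, compl_sdiff_compl,
    and_comm]

theorem ExchangeBelow.preimage_compl {n : ℕ} (hF : ExchangeBelow F n) :
    ExchangeBelow (compl ⁻¹' F) n := by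
  intro A hA B hB i hi hd
  rw [exchangeAt_preimage_compl_iff]
  refine hF Bᶜ hB Aᶜ hA i (by rwa [compl_sdiff_compl]) ?_
  rwa [compl_sdiff_compl, compl_sdiff_compl]

end Compl

structure MinimalCounterexample (F : Set (Finset N)) (X Y : Finset N) (i : N) : Prop where
  bexcPm : BExcPm F
  exchangeBelow : ExchangeBelow F (#(X \ Y) + #(Y \ X))
  left_mem : X ∈ F
  right_mem : Y ∈ F
  index_mem : i ∈ X \ Y
  not_exchangeAt : ¬ ExchangeAt F X Y i

namespace MinimalCounterexample

variable {F : Set (Finset N)} {X Y : Finset N} {i : N}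

theorem insert_erase_notMem_of_erase_insert_mem (h : MinimalCounterexample F X Y i) {j : N}
    (hj : j ∈ Y \ X) (hYj : (insert i Y).erase j ∈ F) : insert j (X.erase i) ∉ F :=
  fun hXj => h.not_exchangeAt (.inr ⟨j, hj, hXj, hYj⟩)

theorem exists_exchange (h : MinimalCounterexample F X Y i) (hYi : insert i Y ∉ F) {k : N}
    (hk : k ∈ Y \ X) {Z : Finset N} (hZ : Z ∈ F) (hiZ : i ∈ Z) (hZY : Z \ Y ⊆ X \ Y)
    (hYZ : Y \ Z ⊆ (Y \ X).erase k) :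
    ∃ u ∈ Y \ X, u ≠ k ∧ insert u (Z.erase i) ∈ F ∧ insert u (X.erase i) ∉ F := by
  have hiZY : i ∈ Z \ Y := mem_sdiff.2 ⟨hiZ, (mem_sdiff.1 h.index_mem).2⟩
  rcases h.exchangeBelow Z hZ Y h.right_mem i hiZY (card_sdiff_add_card_sdiff_lt hk hZY hYZ)
    with ⟨-, hYi'⟩ | ⟨u, hu, hZu, hYu⟩
  · exact absurd hYi' hYi
  obtain ⟨huk, huYX⟩ := mem_erase.1 (hYZ hu)
  exact ⟨u, huYX, huk, hZu, h.insert_erase_notMem_of_erase_insert_mem huYX hYu⟩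

theorem exists_of_insert_mem (h : MinimalCounterexample F X Y i) (hYi : insert i Y ∉ F)
    (hd : 4 ≤ #(X \ Y) + #(Y \ X)) {p : N} (hp : p ∈ Y \ X) (hXp : insert p X ∈ F) :
    ∃ v ∈ Y \ X, insert v X ∈ F ∧ insert p (X.erase i) ∈ F ∧
      insert v (X.erase i) ∉ F := by
  obtain ⟨hiX, hiY⟩ := mem_sdiff.1 h.index_mem
  obtain ⟨hpY, hpX⟩ := mem_sdiff.1 hp
  obtain ⟨v, hv, hvp, hBv, hXv⟩ := h.exists_exchange hYi hp hXp (mem_insert_of_mem hiX)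
    (by intro a; simp only [mem_sdiff, mem_insert]; grind)
    (by intro a; simp only [mem_sdiff, mem_insert, mem_erase]; grind)
  set B := insert v ((insert p X).erase i)
  have hpB : p ∈ B \ X := by simp only [B, mem_sdiff, mem_insert, mem_erase]; grind
  have hXB : X \ B ⊆ {i} := by
    intro a; simp only [B, mem_sdiff, mem_insert, mem_erase, mem_singleton]; tauto
  have hdB : #(B \ X) + #(X \ B) < #(X \ Y) + #(Y \ X) := by
    have h₁ : B \ X ⊆ {p, v} := by
      intro a; simp only [B, mem_sdiff, mem_insert, mem_erase, mem_singleton]; tauto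
    have := card_le_card h₁
    have := card_le_card hXB
    have : #({p, v} : Finset N) ≤ 2 := card_le_two
    simp only [card_singleton] at *
    omega
  rcases h.exchangeBelow B hBv X h.left_mem p hpB hdB with ⟨hBp, -⟩ | ⟨j, hj, hBj, hXj⟩
  · refine absurd ?_ hXv
    convert hBp using 1
    ext a; simp only [B, mem_insert, mem_erase]; grind
  · obtain rfl : j = i := mem_singleton.1 (hXB hj)
    refine ⟨v, hv, ?_, ?_, hXv⟩
    · convert hBj using 1
      ext a; simp only [B, mem_insert, mem_erase]; grind
    · rwa [erase_insert_of_ne (by rintro rfl; exact hpX hiX)] at hXj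

theorem insert_notMem (h : MinimalCounterexample F X Y i) (hYi : insert i Y ∉ F)
    (hd : 4 ≤ #(X \ Y) + #(Y \ X)) {p : N} (hp : p ∈ Y \ X) : insert p X ∉ F := by
  intro hXp
  obtain ⟨v, hv, hXv, -, hXiv⟩ := h.exists_of_insert_mem hYi hd hp hXp
  obtain ⟨-, -, -, hXiv', -⟩ := h.exists_of_insert_mem hYi hd hv hXv
  exact hXiv hXiv'

theorem exists_of_insert_erase_mem (h : MinimalCounterexample F X Y i) (hYi : insert i Y ∉ F)
    (hd : 5 ≤ #(X \ Y) + #(Y \ X)) {t : N} (ht : t ∈ X \ Y) (hti : t ≠ i) {p : N}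
    (hp : p ∈ Y \ X) (hXp : insert p (X.erase t) ∈ F) :
    ∃ u ∈ Y \ X, insert u (X.erase t) ∈ F ∧ insert p (X.erase i) ∈ F ∧
      insert u (X.erase i) ∉ F := by
  obtain ⟨hiX, hiY⟩ := mem_sdiff.1 h.index_mem
  obtain ⟨htX, htY⟩ := mem_sdiff.1 ht
  obtain ⟨hpY, hpX⟩ := mem_sdiff.1 hp
  obtain ⟨u, hu, hup, hDu, hXu⟩ := h.exists_exchange hYi hp hXp
    (by simp only [mem_insert, mem_erase]; grind)
    (by intro a; simp only [mem_sdiff, mem_insert, mem_erase]; grind)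
    (by intro a; simp only [mem_sdiff, mem_insert, mem_erase]; grind)
  set D := insert u ((insert p (X.erase t)).erase i)
  have hpD : p ∈ D \ X := by simp only [D, mem_sdiff, mem_insert, mem_erase]; grind
  have hXD : X \ D ⊆ {i, t} := by
    intro a; simp only [D, mem_sdiff, mem_insert, mem_erase, mem_singleton]; tauto
  have hdD : #(D \ X) + #(X \ D) < #(X \ Y) + #(Y \ X) := by
    have h₁ : D \ X ⊆ {p, u} := by
      intro a; simp only [D, mem_sdiff, mem_insert, mem_erase, mem_singleton]; tauto
    have := card_le_card h₁
    have := card_le_card hXD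
    have : #({p, u} : Finset N) ≤ 2 := card_le_two
    have : #({i, t} : Finset N) ≤ 2 := card_le_two
    omega
  rcases h.exchangeBelow D hDu X h.left_mem p hpD hdD with ⟨-, hXp'⟩ | ⟨j, hj, hDj, hXj⟩
  · exact absurd hXp' (h.insert_notMem hYi (by omega) hp)
  rcases mem_insert.1 (hXD hj) with rfl | hjt
  · refine ⟨u, hu, ?_, ?_, hXu⟩
    · convert hDj using 1
      ext a; simp only [D, mem_insert, mem_erase]; grind
    · rwa [erase_insert_of_ne (by rintro rfl; exact hpX hiX)] at hXj
  · obtain rfl := mem_singleton.1 hjt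
    refine absurd ?_ hXu
    convert hDj using 1
    ext a; simp only [D, mem_insert, mem_erase]; grind

theorem insert_erase_notMem (h : MinimalCounterexample F X Y i) (hYi : insert i Y ∉ F)
    (hd : 5 ≤ #(X \ Y) + #(Y \ X)) {t : N} (ht : t ∈ X \ Y) (hti : t ≠ i) {p : N}
    (hp : p ∈ Y \ X) : insert p (X.erase t) ∉ F := by
  intro hXp
  obtain ⟨u, hu, hXu, -, hXiu⟩ := h.exists_of_insert_erase_mem hYi hd ht hti hp hXp
  obtain ⟨-, -, -, hXiu', -⟩ := h.exists_of_insert_erase_mem hYi hd ht hti hu hXu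
  exact hXiu hXiu'

theorem false_of_card_le_two (h : MinimalCounterexample F X Y i) {k u : N} (hk : k ∈ Y \ X)
    (hu : u ∈ Y \ X) (hku : k ≠ u) (hXk : insert k (X.erase i) ∉ F)
    (hXu : insert u (X.erase i) ∉ F) (hXY : #(X \ Y) ≤ 2) (hYX : #(Y \ X) ≤ 2) : False := by
  obtain ⟨hiX, hiY⟩ := mem_sdiff.1 h.index_mem
  have hYX' : {k, u} = Y \ X :=
    eq_of_subset_of_card_le (insert_subset hk (singleton_subset_iff.2 hu))
      (by rwa [card_pair hku])
  have hXi : X.erase i ∈ F := by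
    rcases (h.bexcPm X h.left_mem Y h.right_mem i h.index_mem).1 with hXi | ⟨j, hj, hXj⟩
    · exact hXi
    rw [← hYX', mem_insert, mem_singleton] at hj
    rcases hj with rfl | rfl
    exacts [absurd hXj hXk, absurd hXj hXu]
  have hk' : k ∈ Y \ X.erase i := by
    simp only [mem_sdiff, mem_erase] at hk ⊢; tauto
  have hd : #(Y \ X.erase i) + #(X.erase i \ Y) < #(X \ Y) + #(Y \ X) := by
    have h₁ : Y \ X.erase i ⊆ Y \ X := by
      intro a; simp only [mem_sdiff, mem_erase]; grind
    have := card_le_card h₁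
    rw [erase_sdiff_comm, card_erase_of_mem h.index_mem]
    have := card_pos.2 ⟨i, h.index_mem⟩
    omega
  rcases h.exchangeBelow Y h.right_mem (X.erase i) hXi k hk' hd with
    ⟨-, hXk'⟩ | ⟨w, hw, hYw, -⟩
  · exact hXk hXk'
  obtain ⟨hwXi, hwY⟩ := mem_sdiff.1 hw
  obtain ⟨hwi, hwX⟩ := mem_erase.1 hwXi
  have hXY' : {i, w} = X \ Y :=
    eq_of_subset_of_card_le
      (insert_subset h.index_mem (singleton_subset_iff.2 (mem_sdiff.2 ⟨hwX, hwY⟩)))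
      (by rwa [card_pair hwi.symm])
  refine hXu ?_
  convert hYw using 1
  ext a
  have h₁ := congrArg (a ∈ ·) hXY'
  have h₂ := congrArg (a ∈ ·) hYX'
  simp only [mem_sdiff, mem_insert, mem_singleton, eq_iff_iff] at h₁ h₂
  simp only [mem_insert, mem_erase]
  grind

theorem insert_mem (h : MinimalCounterexample F X Y i) : insert i Y ∈ F := by
  by_contra hYi
  obtain ⟨hiX, hiY⟩ := mem_sdiff.1 h.index_mem
  obtain ⟨k, hk, hYk⟩ := (h.bexcPm X h.left_mem Y h.right_mem i h.index_mem).2.resolve_left hYi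
  have hXk := h.insert_erase_notMem_of_erase_insert_mem hk hYk
  obtain ⟨hkY, hkX⟩ := mem_sdiff.1 hk
  rcases (h.bexcPm Y h.right_mem X h.left_mem k hk).2 with hXk' | ⟨t, ht, hXt⟩
  · obtain ⟨u, hu, huk, -, hXu⟩ := h.exists_exchange hYi hk hXk' (mem_insert_of_mem hiX)
      (by intro a; simp only [mem_sdiff, mem_insert]; grind)
      (by intro a; simp only [mem_sdiff, mem_insert, mem_erase]; grind)
    have hXY : 0 < #(X \ Y) := card_pos.2 ⟨i, h.index_mem⟩
    have hYX : 1 < #(Y \ X) := one_lt_card.2 ⟨k, hk, u, hu, huk.symm⟩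
    by_cases hsmall : #(X \ Y) ≤ 2 ∧ #(Y \ X) ≤ 2
    · exact h.false_of_card_le_two hk hu huk.symm hXk hXu hsmall.1 hsmall.2
    · exact h.insert_notMem hYi (by omega) hk hXk'
  · have htk : k ≠ t := by grind
    have hti : t ≠ i := by rintro rfl; exact hXk (by rwa [erase_insert_of_ne htk] at hXt)
    rw [erase_insert_of_ne htk] at hXt
    obtain ⟨u, hu, huk, -, hXu⟩ := h.exists_exchange hYi hk hXt
      (by simp only [mem_insert, mem_erase]; grind)
      (by intro a; simp only [mem_sdiff, mem_insert, mem_erase]; grind)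
      (by intro a; simp only [mem_sdiff, mem_insert, mem_erase]; grind)
    have hYX : 1 < #(Y \ X) := one_lt_card.2 ⟨k, hk, u, hu, huk.symm⟩
    have hXY : 1 < #(X \ Y) := one_lt_card.2 ⟨i, h.index_mem, t, ht, hti.symm⟩
    by_cases hsmall : #(X \ Y) ≤ 2 ∧ #(Y \ X) ≤ 2
    · exact h.false_of_card_le_two hk hu huk.symm hXk hXu hsmall.1 hsmall.2
    · exact h.insert_erase_notMem hYi (by omega) ht hti hk hXt

theorem preimage_compl [Fintype N] (h : MinimalCounterexample F X Y i) :
    MinimalCounterexample (compl ⁻¹' F) Yᶜ Xᶜ i where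
  bexcPm := h.bexcPm.preimage_compl
  exchangeBelow := by
    simpa only [compl_sdiff_compl, add_comm] using h.exchangeBelow.preimage_compl
  left_mem := by simpa using h.right_mem
  right_mem := by simpa using h.left_mem
  index_mem := by simpa only [compl_sdiff_compl] using h.index_mem
  not_exchangeAt := by
    simpa only [exchangeAt_preimage_compl_iff, compl_compl] using h.not_exchangeAt

theorem erase_mem [Fintype N] (h : MinimalCounterexample F X Y i) : X.erase i ∈ F := by
  simpa using h.preimage_compl.insert_mem

theorem false [Fintype N] (h : MinimalCounterexample F X Y i) : False :=
  h.not_exchangeAt (.inl ⟨h.erase_mem, h.insert_mem⟩)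

end MinimalCounterexample

theorem BExcPm.exchangeBelow [Fintype N] {F : Set (Finset N)} (hF : BExcPm F) (n : ℕ) :
    ExchangeBelow F n := by
  induction n with
  | zero => intro X _ Y _ i _ hd; omega
  | succ n ih =>
    intro X hX Y hY i hi hd
    rcases Nat.lt_succ_iff_lt_or_eq.1 hd with hlt | rfl
    · exact ih X hX Y hY i hi hlt
    · by_contra hfail
      exact (MinimalCounterexample.mk hF ih hX hY hi hfail).false

theorem BExcPm.bExc [Fintype N] {F : Set (Finset N)} (hF : BExcPm F) : BExc F :=
  fun X hX Y hY i hi => hF.exchangeBelow _ X hX Y hY i hi (Nat.lt_succ_self _)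

end

theorem bexcpm_iff_bexc {N : Type*} [Fintype N] [DecidableEq N]
    (F : Set (Finset N)) : BExcPm F ↔ BExc F :=
  ⟨BExcPm.bExc, BExc.bExcPm⟩
end
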